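/- arXiv:2112.07460 — 6 statements merged into one kernel-verified Lean document; each statement's English description precedes it below -/
import Mathlib

section
/- Let F be a Banach space with Schauder basis (b_i) and biorthogonal functionals (b_i*), and let K = { y ∈ F : b_i*(y) = 0 for i ∈ I₀, b_i*(y) ≤ 0 for i ∈ I₁ }, with I₀, I₁ disjoint and I₀ ∪ I₁ = ℕ. For y₀ ∈ K, the Bouligand tangent cone to K at y₀ equals { z ∈ F : b_i*(z) ≤ 0 for all i ∈ I(y₀), b_i*(z) = 0 for all i ∈ I₀ }, where I(y₀) = { i ∈ I₁ : b_i*(y₀) = 0 }. -/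
open Filter Topology Set

section Defs

variable {X : Type*} [NormedAddCommGroup X] [NormedSpace ℝ X]

/-- Partial sums of a series `∑_{n ∈ J} a n • v n`, summed in the natural order of `ℕ`. -/
noncomputable def partialSumOn (J : Set ℕ) (a : ℕ → ℝ) (v : ℕ → X) (N : ℕ) : X :=
  ∑ n ∈ Finset.range N, J.indicator a n • v n

/-- The series `∑_{n ∈ J} a n • v n` converges to `x`. -/
def ConvergesOn (J : Set ℕ) (a : ℕ → ℝ) (v : ℕ → X) (x : X) : Prop :=
  Tendsto (partialSumOn J a v) atTop (𝓝 x)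

/-- `(v i)_{i ∈ J}` is a Schauder basis (basic family) for the set `S`. -/
def IsSchauderBasisOn (J : Set ℕ) (v : ℕ → X) (S : Set X) : Prop :=
  ∀ x ∈ S, ∃! a : ℕ → ℝ, (∀ n ∉ J, a n = 0) ∧ ConvergesOn J a v x

/-- `(v n)` is a Schauder basis of the whole space. -/
def IsSchauderBasis (v : ℕ → X) : Prop :=
  ∀ x : X, ∃! a : ℕ → ℝ,
    Tendsto (fun N => ∑ n ∈ Finset.range N, a n • v n) atTop (𝓝 x)

/-- Boundedly-complete family: bounded partial sums imply convergence. -/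
def BoundedlyCompleteOn (J : Set ℕ) (v : ℕ → X) : Prop :=
  ∀ a : ℕ → ℝ, (∃ C : ℝ, ∀ N, ‖partialSumOn J a v N‖ ≤ C) →
    ∃ x, ConvergesOn J a v x

/-- Besselian family: convergence of `∑ a n • v n` forces square-summability. -/
def BesselianOn (J : Set ℕ) (v : ℕ → X) : Prop :=
  ∀ a : ℕ → ℝ, (∀ n ∉ J, a n = 0) → (∃ x, ConvergesOn J a v x) →
    Summable (fun n => (a n) ^ 2)

/-- Hilbertian family: square-summability forces convergence of `∑ a n • v n`. -/
def HilbertianOn (J : Set ℕ) (v : ℕ → X) : Prop :=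
  ∀ a : ℕ → ℝ, (∀ n ∉ J, a n = 0) → Summable (fun n => (a n) ^ 2) →
    ∃ x, ConvergesOn J a v x

/-- The Bouligand (contingent) tangent cone to `Q` at `y`. -/
def bouligandTangentCone (Q : Set X) (y : X) : Set X :=
  {d | ∃ (yk : ℕ → X) (tk : ℕ → ℝ), (∀ k, yk k ∈ Q) ∧ (∀ k, 0 < tk k) ∧
     Tendsto tk atTop (𝓝 0) ∧ Tendsto yk atTop (𝓝 y) ∧
     Tendsto (fun k => (tk k)⁻¹ • (yk k - y)) atTop (𝓝 d)}

/-- Shrinking family: the biorthogonal functionals form a basis of the dual of the closed span. -/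
def ShrinkingOn (J₁ J₂ : Set ℕ) (v : ℕ → X) : Prop :=
  ∃ vs : ℕ → (↥((Submodule.span ℝ (v '' J₁)).topologicalClosure) →L[ℝ] ℝ),
    (∀ i ∈ J₂, ∀ j ∈ J₂,
        ∀ h : v j ∈ (Submodule.span ℝ (v '' J₁)).topologicalClosure,
        vs i ⟨v j, h⟩ = if i = j then 1 else 0) ∧
    IsSchauderBasisOn J₂ vs Set.univ

end Defs

section CRC

variable {E F : Type*} [NormedAddCommGroup E] [NormedSpace ℝ E]
  [NormedAddCommGroup F] [NormedSpace ℝ F]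

/-- The Constant Rank Condition Plus for the family `(f_i)_{i ∈ J₁}` at `x₀`
with basic index set `J₂` and neighbourhood `V`, where `b` is the basis of the
target space and `w j` represents the biorthogonal functional `Df_j(x₀)*` as an
element of `E`. -/
def CRCplus (J₁ J₂ : Set ℕ) (fi : ℕ → E → ℝ) (b : ℕ → F) (w : ℕ → E)
    (x₀ : E) (V : Set E) : Prop :=
  J₂ ⊆ J₁ ∧ V ∈ 𝓝 x₀ ∧
  -- 1. `(Df_i(x))_{i∈J₂}` is a Schauder basis of the closed span of `(Df_i(x))_{i∈J₁}`
  (∀ x ∈ V, IsSchauderBasisOn J₂ (fun i => fderiv ℝ (fi i) x)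
      (((Submodule.span ℝ ((fun i => fderiv ℝ (fi i) x) '' J₁)).topologicalClosure :
        Submodule ℝ (E →L[ℝ] ℝ)) : Set (E →L[ℝ] ℝ))) ∧
  -- 2. for `x ∈ V`, `(Df_i(x))_{i∈J₂}` is equivalent (isomorphic via `z_x`) to `(Df_i(x₀))_{i∈J₂}`
  (∀ x ∈ V, ∀ a : ℕ → ℝ, (∀ n ∉ J₂, a n = 0) →
    ((∃ φ : E →L[ℝ] ℝ, ConvergesOn J₂ a (fun i => fderiv ℝ (fi i) x) φ) ↔
     (∃ φ : E →L[ℝ] ℝ, ConvergesOn J₂ a (fun i => fderiv ℝ (fi i) x₀) φ))) ∧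
  -- 3. the image `(Df_i(x₀))_{i∈J₂}(E)` is closed in `Y(J₂)`
  IsClosed {y : F | ∃ e : E, ConvergesOn J₂ (fun i => fderiv ℝ (fi i) x₀ e) b y} ∧
  -- 4. `(Df_i(x₀))_{i∈J₂}` is a shrinking and boundedly-complete basis of the closed span
  ShrinkingOn J₁ J₂ (fun i => fderiv ℝ (fi i) x₀) ∧
  BoundedlyCompleteOn J₂ (fun i => fderiv ℝ (fi i) x₀) ∧
  -- 5. Besselian
  BesselianOn J₂ (fun i => fderiv ℝ (fi i) x₀) ∧
  -- 6. the biorthogonal functionals `Df_i(x₀)*` lie in `E`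
  (∀ i ∈ J₂, ∀ j ∈ J₂, fderiv ℝ (fi i) x₀ (w j) = if i = j then 1 else 0)

end CRC

theorem stmt2 {F : Type*} [NormedAddCommGroup F] [NormedSpace ℝ F] [CompleteSpace F]
    (b : ℕ → F) (hb : IsSchauderBasis b)
    (bs : ℕ → (F →L[ℝ] ℝ))
    (hbi : ∀ i j, bs i (b j) = if i = j then 1 else 0)
    (hexp : ∀ y : F, Tendsto (fun N => ∑ n ∈ Finset.range N, bs n y • b n) atTop (𝓝 y))
    (I₀ I₁ : Set ℕ) (hdisj : Disjoint I₀ I₁) (hunion : I₀ ∪ I₁ = Set.univ)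
    (y₀ : F) (hy₀ : y₀ ∈ {y : F | (∀ i ∈ I₀, bs i y = 0) ∧ ∀ i ∈ I₁, bs i y ≤ 0}) :
    bouligandTangentCone {y : F | (∀ i ∈ I₀, bs i y = 0) ∧ ∀ i ∈ I₁, bs i y ≤ 0} y₀ =
      {z : F | (∀ i ∈ I₁, bs i y₀ = 0 → bs i z ≤ 0) ∧ ∀ i ∈ I₀, bs i z = 0} := by
  classical
  obtain ⟨hy0, hy1⟩ := hy₀
  ext z
  simp only [Set.mem_setOf_eq]
  constructor
  · rintro ⟨yk, tk, hmem, htpos, ht0, hyk, hlim⟩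
    constructor
    · intro i hi hzero
      have hcont : Tendsto (fun k => bs i ((tk k)⁻¹ • (yk k - y₀))) atTop (𝓝 (bs i z)) :=
        ((bs i).continuous.tendsto z).comp hlim
      refine le_of_tendsto hcont (Eventually.of_forall fun k => ?_)
      have h1 : bs i ((tk k)⁻¹ • (yk k - y₀)) = (tk k)⁻¹ * bs i (yk k) := by
        simp [map_smul, map_sub, hzero]
      rw [h1]
      exact mul_nonpos_of_nonneg_of_nonpos (inv_nonneg.2 (htpos k).le) ((hmem k).2 i hi)
    · intro i hi
      have hcont : Tendsto (fun k => bs i ((tk k)⁻¹ • (yk k - y₀))) atTop (𝓝 (bs i z)) :=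
        ((bs i).continuous.tendsto z).comp hlim
      have h1 : (fun k => bs i ((tk k)⁻¹ • (yk k - y₀))) = fun _ => (0 : ℝ) := by
        funext k
        simp [map_smul, map_sub, (hmem k).1 i hi, hy0 i hi]
      rw [h1] at hcont
      exact tendsto_nhds_unique hcont tendsto_const_nhds
  · rintro ⟨hz1, hz0⟩
    set P : ℕ → F := fun N => ∑ n ∈ Finset.range N, bs n z • b n with hPdef
    have hPcoef : ∀ i N, bs i (P N) = if i ∈ Finset.range N then bs i z else 0 := by
      intro i N
      rw [hPdef]
      simp only [map_sum, map_smul, smul_eq_mul, hbi]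
      rw [Finset.sum_congr rfl (fun n _ => by rw [mul_ite, mul_one, mul_zero]),
        Finset.sum_ite_eq (Finset.range N) i (fun n => bs n z)]
    -- the threshold function
    set c : ℕ → ℝ := fun i => if 0 < bs i z ∧ bs i y₀ < 0 then (-bs i y₀) / (bs i z) else 1
      with hcdef
    have hcpos : ∀ i, 0 < c i := by
      intro i
      simp only [hcdef]
      split_ifs with h
      · exact div_pos (by linarith [h.2]) h.1
      · exact one_pos
    set t : ℕ → ℝ := fun k =>
      (Finset.range (k + 1)).inf' (Finset.nonempty_range_iff.2 (Nat.succ_ne_zero k))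
        (fun i => min ((k + 1 : ℝ))⁻¹ (c i)) with htdef
    have htpos : ∀ k, 0 < t k := by
      intro k
      rw [htdef]
      rw [Finset.lt_inf'_iff]
      intro i _
      exact lt_min (by positivity) (hcpos i)
    have htle : ∀ k, t k ≤ ((k + 1 : ℝ))⁻¹ := by
      intro k
      refine le_trans (Finset.inf'_le _ (Finset.self_mem_range_succ k)) (min_le_left _ _)
    have htlec : ∀ k, ∀ i ∈ Finset.range (k + 1), t k ≤ c i := by
      intro k i hi
      exact le_trans (Finset.inf'_le _ hi) (min_le_right _ _)
    have ht0 : Tendsto t atTop (𝓝 0) := by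
      refine squeeze_zero (fun k => (htpos k).le) htle ?_
      have := tendsto_one_div_add_atTop_nhds_zero_nat (𝕜 := ℝ)
      simpa [one_div] using this
    have hPz : Tendsto (fun k => P (k + 1)) atTop (𝓝 z) :=
      (hexp z).comp (tendsto_add_atTop_nat 1)
    refine ⟨fun k => y₀ + t k • P (k + 1), t, ?_, htpos, ht0, ?_, ?_⟩
    · intro k
      constructor
      · intro i hi
        have := hPcoef i (k + 1)
        rw [map_add, map_smul, smul_eq_mul, hy0 i hi, this]
        split_ifs with h
        · rw [hz0 i hi]; ring
        · ring
      · intro i hi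
        rw [map_add, map_smul, smul_eq_mul, hPcoef i (k + 1)]
        split_ifs with h
        · rcases eq_or_lt_of_le (hy1 i hi) with hiy | hiy
          · rw [hiy]
            have := hz1 i hi hiy
            nlinarith [(htpos k).le]
          · rcases le_or_gt (bs i z) 0 with hbz | hbz
            · nlinarith [(htpos k).le]
            · have hc : c i = (-bs i y₀) / (bs i z) := by
                simp only [hcdef]
                exact if_pos ⟨hbz, hiy⟩
              have h2 := htlec k i h
              rw [hc, le_div_iff₀ hbz] at h2
              linarith
        · simpa using hy1 i hi
    · have : Tendsto (fun k => y₀ + t k • P (k + 1)) atTop (𝓝 (y₀ + (0 : ℝ) • z)) :=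
        tendsto_const_nhds.add (ht0.smul hPz)
      simpa using this
    · have heq : (fun k => (t k)⁻¹ • (y₀ + t k • P (k + 1) - y₀)) = fun k => P (k + 1) := by
        funext k
        rw [add_sub_cancel_left, smul_smul, inv_mul_cancel₀ (htpos k).ne', one_smul]
      rw [heq]
      exact hPz
end

section
/- There is no Schauder basis (f_k) of L²([0,1]) consisting of nonnegative functions such that the nonnegative cone L²₊([0,1]) equals { Σ a_k f_k : a_k ≥ 0 for all k with the series convergent }. In other words, the natural nonnegative cone of L²([0,1]) is not a basis cone. -/
open Filter Topology Set

open MeasureTheory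

theorem stmt3 :
    ¬ ∃ f : ℕ → Lp ℝ 2 (volume.restrict (Set.Icc (0:ℝ) 1)),
      (∀ k, (0 : ℝ → ℝ) ≤ᵐ[volume.restrict (Set.Icc (0:ℝ) 1)] ⇑(f k)) ∧
      IsSchauderBasis f ∧
      ∀ y : Lp ℝ 2 (volume.restrict (Set.Icc (0:ℝ) 1)),
        ((0 : ℝ → ℝ) ≤ᵐ[volume.restrict (Set.Icc (0:ℝ) 1)] ⇑y ↔
          ∃ a : ℕ → ℝ, (∀ k, 0 ≤ a k) ∧
            Tendsto (fun N => ∑ k ∈ Finset.range N, a k • f k) atTop (𝓝 y)) := by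
  set μ := volume.restrict (Set.Icc (0:ℝ) 1) with hμdef
  rintro ⟨f, hpos, hbasis, hcone⟩
  haveI : IsFiniteMeasure μ := by
    constructor
    rw [hμdef, Measure.restrict_apply_univ, Real.volume_Icc]
    exact ENNReal.ofReal_lt_top
  -- the delta sequences expand the basis vectors
  have hdelta : ∀ j, Tendsto (fun N => ∑ k ∈ Finset.range N, (if k = j then (1:ℝ) else 0) • f k)
      atTop (𝓝 (f j)) := by
    intro j
    apply tendsto_atTop_of_eventually_const (i₀ := j + 1)
    intro N hN
    have h1 : ∀ k, (if k = j then (1:ℝ) else 0) • f k = if k = j then f k else 0 := by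
      intro k; split <;> simp
    simp only [h1]
    rw [Finset.sum_ite_eq' (Finset.range N) j f, if_pos (Finset.mem_range.mpr (by omega))]
  -- pairwise disjointness of f 0 and f k for k ≠ 0
  have hdisj : ∀ k, k ≠ 0 → f 0 ⊓ f k = 0 := by
    intro k hk
    set y : Lp ℝ 2 μ := f 0 ⊓ f k with hy
    have h1 : (0 : ℝ → ℝ) ≤ᵐ[μ] ⇑y := by
      filter_upwards [Lp.coeFn_inf (f 0) (f k), hpos 0, hpos k] with t ht h0 hk'
      rw [ht]
      exact le_inf h0 hk'
    obtain ⟨a, ha0, hay⟩ := (hcone y).mp h1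
    have h2 : (0 : ℝ → ℝ) ≤ᵐ[μ] ⇑(f 0 - y) := by
      filter_upwards [Lp.coeFn_sub (f 0) y, Lp.coeFn_inf (f 0) (f k)] with t ht hinf
      rw [ht]
      simp only [Pi.sub_apply, Pi.zero_apply, sub_nonneg, hinf]
      exact hinf.le.trans (by simp [Pi.inf_apply])
    obtain ⟨b, hb0, hb⟩ := (hcone (f 0 - y)).mp h2
    have h3 : (0 : ℝ → ℝ) ≤ᵐ[μ] ⇑(f k - y) := by
      filter_upwards [Lp.coeFn_sub (f k) y, Lp.coeFn_inf (f 0) (f k)] with t ht hinf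
      rw [ht]
      simp only [Pi.sub_apply, Pi.zero_apply, sub_nonneg, hinf]
      exact hinf.le.trans (by simp [Pi.inf_apply])
    obtain ⟨b', hb'0, hb'⟩ := (hcone (f k - y)).mp h3
    have hsum : ∀ (u v : ℕ → ℝ), (fun N => ∑ i ∈ Finset.range N, (u i + v i) • f i)
        = fun N => (∑ i ∈ Finset.range N, u i • f i) + ∑ i ∈ Finset.range N, v i • f i := by
      intro u v
      funext N
      rw [← Finset.sum_add_distrib]
      exact Finset.sum_congr rfl fun i _ => add_smul _ _ _
    have hab : (fun i => a i + b i) = fun i => if i = 0 then (1:ℝ) else 0 := by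
      refine (hbasis (f 0)).unique ?_ (hdelta 0)
      show Tendsto (fun N => ∑ i ∈ Finset.range N, (a i + b i) • f i) atTop (𝓝 (f 0))
      rw [hsum]
      have h4 := hay.add hb
      have h5 : y + (f 0 - y) = f 0 := by abel
      rwa [h5] at h4
    have hab' : (fun i => a i + b' i) = fun i => if i = k then (1:ℝ) else 0 := by
      refine (hbasis (f k)).unique ?_ (hdelta k)
      show Tendsto (fun N => ∑ i ∈ Finset.range N, (a i + b' i) • f i) atTop (𝓝 (f k))
      rw [hsum]
      have h4 := hay.add hb'
      have h5 : y + (f k - y) = f k := by abel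
      rwa [h5] at h4
    have ha_zero : a = fun _ => (0:ℝ) := by
      funext i
      have e1 := congrFun hab i
      have e2 := congrFun hab' i
      by_cases h0 : i = 0
      · subst h0
        rw [if_neg (Ne.symm hk)] at e2
        have := ha0 0; have := hb'0 0; linarith
      · rw [if_neg h0] at e1
        have := ha0 i; have := hb0 i; linarith
    have h6 := hay
    rw [ha_zero] at h6
    have h7 : (fun N => ∑ k ∈ Finset.range N, (fun _ => (0:ℝ)) k • f k)
        = fun _ : ℕ => (0 : Lp ℝ 2 μ) := by
      funext N; simp
    rw [h7] at h6
    exact tendsto_nhds_unique h6 tendsto_const_nhds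
  -- a.e. version of disjointness
  have aedisj : ∀ᵐ t ∂μ, ∀ k, k ≠ 0 → 0 < f 0 t → f k t = 0 := by
    rw [ae_all_iff]
    intro k
    by_cases hk : k = 0
    · filter_upwards with t h
      exact absurd hk h
    · have h0 : ⇑(f 0 ⊓ f k) =ᵐ[μ] (0 : ℝ → ℝ) := by
        rw [hdisj k hk]
        exact Lp.coeFn_zero ℝ 2 μ
      filter_upwards [h0, Lp.coeFn_inf (f 0) (f k), hpos k] with t ht hinf hknn
      intro _ h0t
      have hmin : f 0 t ⊓ f k t = 0 := by
        have h' := hinf.symm.trans ht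
        simpa using h'
      by_contra hne
      have hkpos : 0 < f k t := lt_of_le_of_ne hknn (Ne.symm hne)
      have : (0:ℝ) < f 0 t ⊓ f k t := lt_inf_iff.mpr ⟨h0t, hkpos⟩
      rw [hmin] at this
      exact lt_irrefl 0 this
  -- the set where f 0 is positive
  have hm0 : Measurable ⇑(f 0) := (Lp.stronglyMeasurable (f 0)).measurable
  set s0 : Set ℝ := {t | 0 < f 0 t} with hs0
  have hs0m : MeasurableSet s0 := measurableSet_lt measurable_const hm0
  have hs0pos : 0 < μ s0 := by
    rcases eq_or_lt_of_le (zero_le : 0 ≤ μ s0) with h | h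
    · exfalso
      have hnm : ∀ᵐ t ∂μ, t ∉ s0 := measure_eq_zero_iff_ae_notMem.mp h.symm
      have hf00 : f 0 = 0 := by
        rw [Lp.eq_zero_iff_ae_eq_zero]
        filter_upwards [hnm, hpos 0] with t ht h0
        have : ¬ 0 < f 0 t := ht
        exact le_antisymm (not_lt.mp this) h0
      have hz : Tendsto (fun N => ∑ k ∈ Finset.range N, (fun _ => (0:ℝ)) k • f k) atTop
          (𝓝 (0 : Lp ℝ 2 μ)) := by
        have h7 : (fun N => ∑ k ∈ Finset.range N, (fun _ => (0:ℝ)) k • f k)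
            = fun _ : ℕ => (0 : Lp ℝ 2 μ) := by
          funext N; simp
        rw [h7]
        exact tendsto_const_nhds
      have hd0 : Tendsto (fun N => ∑ k ∈ Finset.range N, (if k = 0 then (1:ℝ) else 0) • f k) atTop
          (𝓝 (0 : Lp ℝ 2 μ)) := by
        have := hdelta 0
        rwa [hf00] at this
      have := (hbasis (0 : Lp ℝ 2 μ)).unique hd0 hz
      have h10 := congrFun this 0
      simp at h10
    · exact h
  -- key representation: every y is a.e. a multiple of f 0 on s0
  have hrep : ∀ y : Lp ℝ 2 μ, ∃ c : ℝ, ∀ᵐ t ∂μ, 0 < f 0 t → y t = c * f 0 t := by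
    intro y
    obtain ⟨a, hay, -⟩ := hbasis y
    refine ⟨a 0, ?_⟩
    set P : ℕ → Lp ℝ 2 μ := fun N => ∑ k ∈ Finset.range N, a k • f k with hP
    have hmeasconv := tendstoInMeasure_of_tendsto_Lp (hay : Tendsto P atTop (𝓝 y))
    obtain ⟨ns, hns, hae⟩ := hmeasconv.exists_seq_tendsto_ae
    have hcoe : ∀ᵐ t ∂μ, ∀ N, P N t = ∑ k ∈ Finset.range N, a k * f k t := by
      rw [ae_all_iff]
      intro N
      induction N with
      | zero => simpa [hP, Filter.EventuallyEq] using (Lp.coeFn_zero ℝ 2 μ)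
      | succ n ih =>
        have hPn : P (n + 1) = P n + a n • f n := by
          rw [hP]
          simp [Finset.sum_range_succ]
        rw [hPn]
        filter_upwards [Lp.coeFn_add (P n) (a n • f n), Lp.coeFn_smul (a n) (f n), ih]
          with t h1 h2 h3
        rw [h1]
        simp only [Pi.add_apply, h2, Pi.smul_apply, smul_eq_mul, h3, Finset.sum_range_succ]
    filter_upwards [hae, hcoe, aedisj] with t h1 h2 h3
    intro h0t
    have hconst : Tendsto (fun i => P (ns i) t) atTop (𝓝 (a 0 * f 0 t)) := by
      apply tendsto_atTop_of_eventually_const (i₀ := 1)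
      intro i hi
      rw [h2 (ns i)]
      have hmem : 0 ∈ Finset.range (ns i) := by
        have h1i : 1 ≤ ns i := le_trans hi hns.le_apply
        exact Finset.mem_range.mpr (by omega)
      refine Finset.sum_eq_single_of_mem 0 hmem ?_
      intro b _ hb
      rw [h3 b hb h0t, mul_zero]
    exact tendsto_nhds_unique h1 hconst
  -- test function 1: indicator of s0
  have hs0ne : μ s0 ≠ ⊤ := measure_ne_top μ s0
  obtain ⟨c2, hc2⟩ := hrep (indicatorConstLp 2 hs0m hs0ne (1:ℝ))
  -- test function 2: t * indicator of s0
  have hg1 : MemLp (s0.indicator id) 2 μ := by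
    apply MemLp.of_bound ((measurable_id.indicator hs0m).aestronglyMeasurable) 1
    rw [hμdef]
    filter_upwards [ae_restrict_mem measurableSet_Icc] with t ht
    have hval : s0.indicator id t = if t ∈ s0 then t else 0 := Set.indicator_apply _ _ _
    rw [hval, Real.norm_eq_abs, abs_le]
    constructor
    · split
      · linarith [ht.1]
      · norm_num
    · split
      · linarith [ht.2]
      · norm_num
  obtain ⟨c1, hc1⟩ := hrep (hg1.toLp _)
  -- combine to show t is a.e. constant on s0
  have hfinal : ∀ᵐ t ∂μ, t ∈ s0 → t = c1 / c2 := by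
    filter_upwards [hc2, hc1, indicatorConstLp_coeFn (p := 2) (hs := hs0m) (hμs := hs0ne)
      (c := (1:ℝ)), hg1.coeFn_toLp] with t h2 h1 hind htl
    intro hts
    have h0t : 0 < f 0 t := hts
    have e2 := h2 h0t
    rw [hind] at e2
    simp only [Set.indicator_of_mem hts] at e2
    have e1 := h1 h0t
    rw [htl] at e1
    simp only [Set.indicator_of_mem hts, id_eq] at e1
    have hc2ne : c2 ≠ 0 := by
      intro h
      rw [h, zero_mul] at e2
      norm_num at e2
    have hkey : t * c2 = c1 := by
      calc t * c2 = (c1 * f 0 t) * c2 := by rw [← e1]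
        _ = c1 * (c2 * f 0 t) := by ring
        _ = c1 * 1 := by rw [← e2]
        _ = c1 := mul_one c1
    rw [eq_div_iff hc2ne]
    exact hkey
  -- contradiction with positivity of μ s0 and atomlessness
  have hnull : μ {t : ℝ | ¬ (t ∈ s0 → t = c1 / c2)} = 0 := ae_iff.mp hfinal
  have hsing : μ {(c1 / c2 : ℝ)} = 0 := by
    rw [hμdef, Measure.restrict_apply (measurableSet_singleton _)]
    refine le_antisymm (le_trans (measure_mono Set.inter_subset_left) ?_) zero_le
    rw [Real.volume_singleton]
  have hsub : s0 ⊆ {t : ℝ | ¬ (t ∈ s0 → t = c1 / c2)} ∪ {(c1 / c2 : ℝ)} := by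
    intro t ht
    by_cases h : t = c1 / c2
    · exact Or.inr h
    · exact Or.inl (fun hcon => h (hcon ht))
  have : μ s0 = 0 := by
    refine le_antisymm (le_trans (measure_mono hsub) ?_) zero_le
    calc μ ({t : ℝ | ¬ (t ∈ s0 → t = c1 / c2)} ∪ {(c1 / c2 : ℝ)})
        ≤ μ {t : ℝ | ¬ (t ∈ s0 → t = c1 / c2)} + μ {(c1 / c2 : ℝ)} := measure_union_le _ _
      _ = 0 := by rw [hnull, hsing, add_zero]
  exact absurd this hs0pos.ne'
end

section
/- Let X be a Banach space with a Schauder basis (c_i) and biorthogonal functionals (c_i*). Then (c_i) is Hilbertian if and only if the basic sequence (c_i*) in X* is Besselian, and (c_i) is Besselian if and only if (c_i*) is Hilbertian. -/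
open Filter Topology Set

section Aux
set_option maxHeartbeats 1000000

/-- Cauchy–Schwarz for finset sums, absolute value form. -/
lemma abs_sum_mul_le (s : Finset ℕ) (f g : ℕ → ℝ) :
    |∑ i ∈ s, f i * g i| ≤ Real.sqrt (∑ i ∈ s, f i ^ 2) * Real.sqrt (∑ i ∈ s, g i ^ 2) := by
  have h := Finset.sum_mul_sq_le_sq_mul_sq s f g
  have h1 : |∑ i ∈ s, f i * g i| = Real.sqrt ((∑ i ∈ s, f i * g i) ^ 2) := by
    rw [Real.sqrt_sq_eq_abs]
  rw [h1, ← Real.sqrt_mul (by positivity)]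
  exact Real.sqrt_le_sqrt h

/-- Landau's theorem (elementary form): if `∑ a n * b n` converges for every
square-summable `b`, then `a` is square-summable. -/
lemma landau (a : ℕ → ℝ)
    (h : ∀ b : ℕ → ℝ, Summable (fun n => b n ^ 2) →
      ∃ l : ℝ, Tendsto (fun N => ∑ n ∈ Finset.range N, a n * b n) atTop (𝓝 l)) :
    Summable (fun n => a n ^ 2) := by
  by_contra hs
  set s : ℕ → ℝ := fun N => ∑ n ∈ Finset.range N, a n ^ 2 with hs_def
  have hnn : ∀ n, (0:ℝ) ≤ a n ^ 2 := fun n => sq_nonneg _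
  have hmono : Monotone s := fun m n hmn =>
    Finset.sum_le_sum_of_subset_of_nonneg (Finset.range_subset_range.2 hmn) (fun i _ _ => hnn i)
  have htop : Tendsto s atTop atTop :=
    (not_summable_iff_tendsto_nat_atTop_of_nonneg hnn).1 hs
  -- choose n₀ with s n₀ ≥ 1
  obtain ⟨n₀, hn₀⟩ := (htop.eventually_ge_atTop 1).exists
  have hspos : ∀ n ≥ n₀, (1:ℝ) ≤ s n := fun n hn => le_trans hn₀ (hmono hn)
  set b : ℕ → ℝ := fun n => a n / s (n + 1) with hb_def
  -- b is square-summable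
  have hbsum : Summable (fun n => b n ^ 2) := by
    apply summable_of_sum_range_le (c := (∑ n ∈ Finset.range n₀, b n ^ 2) + 1)
      (fun n => sq_nonneg _)
    intro N
    rcases le_or_gt N n₀ with hN | hN
    · have : ∑ n ∈ Finset.range N, b n ^ 2 ≤ ∑ n ∈ Finset.range n₀, b n ^ 2 :=
        Finset.sum_le_sum_of_subset_of_nonneg (Finset.range_subset_range.2 hN)
          (fun i _ _ => sq_nonneg _)
      linarith
    · have hsplit : ∑ n ∈ Finset.range N, b n ^ 2
          = ∑ n ∈ Finset.range n₀, b n ^ 2 + ∑ n ∈ Finset.Ico n₀ N, b n ^ 2 := by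
        rw [← Finset.sum_range_add_sum_Ico _ hN.le]
      have hkey : ∑ n ∈ Finset.Ico n₀ N, b n ^ 2 ≤ 1 := by
        have hterm : ∀ n ∈ Finset.Ico n₀ N, b n ^ 2 ≤ 1 / s n - 1 / s (n+1) := by
          intro n hn
          obtain ⟨hn1, _⟩ := Finset.mem_Ico.1 hn
          have h1 : (1:ℝ) ≤ s n := hspos n hn1
          have h2 : (1:ℝ) ≤ s (n+1) := hspos (n+1) (le_trans hn1 (Nat.le_succ n))
          have hle : s n ≤ s (n+1) := hmono (Nat.le_succ n)
          have hd : s (n+1) - s n = a n ^ 2 := by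
            simp [hs_def, Finset.sum_range_succ]
          have : b n ^ 2 = a n ^ 2 / (s (n+1))^2 := by
            rw [hb_def]; rw [div_pow]
          rw [this, ← hd]
          rw [div_le_iff₀ (by positivity)]
          have hpos1 : (0:ℝ) < s n := by linarith
          have hpos2 : (0:ℝ) < s (n+1) := by linarith
          have hdiv : s (n+1)^2 / s n * s n = s (n+1)^2 :=
            div_mul_cancel₀ _ (ne_of_gt hpos1)
          have key : (1 / s n - 1 / s (n+1)) * s (n+1) ^ 2 = s (n+1)^2 / s n - s (n+1) := by
            field_simp
          rw [key]
          nlinarith [sq_nonneg (s (n+1) - s n), hdiv]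
        calc ∑ n ∈ Finset.Ico n₀ N, b n ^ 2 ≤ ∑ n ∈ Finset.Ico n₀ N, (1 / s n - 1 / s (n+1)) :=
              Finset.sum_le_sum hterm
          _ = 1 / s n₀ - 1 / s N := by
              rw [← neg_sub_neg]
              have := Finset.sum_Ico_eq_sub (fun k => -(1 / s k)) hN.le
              simp only [← Finset.sum_range_add_sum_Ico (fun k => -(1/s k)) hN.le] at this
              have teles : ∀ m : ℕ, ∑ n ∈ Finset.range m, (1 / s n - 1 / s (n+1))
                  = 1 / s 0 - 1 / s m := by
                intro m
                induction m with
                | zero => simp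
                | succ k ih => rw [Finset.sum_range_succ, ih]; ring
              have e1 := teles N
              have e2 := teles n₀
              have := Finset.sum_range_add_sum_Ico (fun n => 1 / s n - 1 / s (n+1)) hN.le
              rw [e2] at this
              have : ∑ n ∈ Finset.Ico n₀ N, (1 / s n - 1 / s (n+1))
                  = (1 / s 0 - 1 / s N) - (1 / s 0 - 1 / s n₀) := by
                rw [← e1, ← this]; ring
              rw [this]; ring
          _ ≤ 1 := by
              have h1 : (1:ℝ) ≤ s n₀ := hspos n₀ le_rfl
              have h2 : (1:ℝ) ≤ s N := hspos N hN.le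
              have : (0:ℝ) < s N := by linarith
              have : 0 ≤ 1 / s N := by positivity
              have : 1 / s n₀ ≤ 1 := by
                rw [div_le_one (by linarith)]; linarith
              linarith
      linarith
  -- apply hypothesis
  obtain ⟨l, hl⟩ := h b hbsum
  have hab : ∀ N, ∑ n ∈ Finset.range N, a n * b n = ∑ n ∈ Finset.range N, a n ^ 2 / s (n+1) := by
    intro N; apply Finset.sum_congr rfl; intro n _; rw [hb_def]; ring
  have hcauchy := hl.cauchySeq
  rw [Metric.cauchySeq_iff] at hcauchy
  obtain ⟨N₁, hN₁⟩ := hcauchy (1/2) (by norm_num)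
  set N := max N₁ n₀ with hN_def
  have hsN : (1:ℝ) ≤ s N := hspos N (le_max_right _ _)
  obtain ⟨M₀, hM₀⟩ := (htop.eventually_ge_atTop (2 * s N)).exists
  set M := max M₀ N with hM_def
  have hsM : 2 * s N ≤ s M := le_trans hM₀ (hmono (le_max_left _ _))
  have hNM : N ≤ M := le_max_right _ _
  have hdist := hN₁ M (le_trans (le_max_left _ _) hNM) N (le_max_left _ _)
  rw [Real.dist_eq] at hdist
  have hdiff : ∑ n ∈ Finset.range M, a n * b n - ∑ n ∈ Finset.range N, a n * b n
      = ∑ n ∈ Finset.Ico N M, a n ^ 2 / s (n+1) := by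
    rw [hab, hab, eq_comm]
    exact Finset.sum_Ico_eq_sub _ hNM
  have hlow : (s M - s N) / s M ≤ ∑ n ∈ Finset.Ico N M, a n ^ 2 / s (n+1) := by
    have hsMpos : (0:ℝ) < s M := by linarith
    have : ∀ n ∈ Finset.Ico N M, a n ^ 2 / s M ≤ a n ^ 2 / s (n+1) := by
      intro n hn
      obtain ⟨hn1, hn2⟩ := Finset.mem_Ico.1 hn
      have h2 : (1:ℝ) ≤ s (n+1) :=
        hspos (n+1) (le_trans (le_max_right _ _) (hn1.trans (Nat.le_succ n)))
      exact div_le_div_of_nonneg_left (sq_nonneg _) (by linarith) (hmono (Nat.succ_le_of_lt hn2))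
    calc (s M - s N) / s M = (∑ n ∈ Finset.Ico N M, a n ^ 2) / s M := by
          rw [Finset.sum_Ico_eq_sub _ hNM]
      _ = ∑ n ∈ Finset.Ico N M, a n ^ 2 / s M := by rw [Finset.sum_div]
      _ ≤ _ := Finset.sum_le_sum this
  have hhalf : (1:ℝ)/2 ≤ (s M - s N) / s M := by
    have hsMpos : (0:ℝ) < s M := by linarith
    rw [le_div_iff₀ hsMpos]; linarith
  have : |∑ n ∈ Finset.range M, a n * b n - ∑ n ∈ Finset.range N, a n * b n| ≥ 1/2 := by
    rw [hdiff]; rw [abs_of_nonneg (by positivity)]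
    · linarith
  linarith [abs_sub_comm (∑ n ∈ Finset.range M, a n * b n) (∑ n ∈ Finset.range N, a n * b n) ▸ hdist, this]

variable {X : Type*} [NormedAddCommGroup X] [NormedSpace ℝ X]



/-- Extract coefficients from a converging basis expansion. -/
lemma coeff_eq (c : ℕ → X) (cs : ℕ → (X →L[ℝ] ℝ))
    (hbi : ∀ i j, cs i (c j) = if i = j then 1 else 0)
    {a : ℕ → ℝ} {x : X}
    (h : Tendsto (fun N => ∑ n ∈ Finset.range N, a n • c n) atTop (𝓝 x)) (i : ℕ) :
    cs i x = a i := by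
  have h2 : Tendsto (fun N => cs i (∑ n ∈ Finset.range N, a n • c n)) atTop (𝓝 (cs i x)) :=
    ((cs i).continuous.tendsto x).comp h
  have h3 : ∀ N, i < N → cs i (∑ n ∈ Finset.range N, a n • c n) = a i := by
    intro N hN
    rw [map_sum]
    have : ∀ n ∈ Finset.range N, cs i (a n • c n) = if i = n then a n else 0 := by
      intro n _
      rw [(cs i).map_smul, hbi i n]
      by_cases hni : i = n <;> simp [hni]
    rw [Finset.sum_congr rfl this, Finset.sum_ite_eq (Finset.range N) i (fun n => a n)]
    simp [Finset.mem_range.2 hN]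
  have h4 : Tendsto (fun _ : ℕ => a i) atTop (𝓝 (cs i x)) := by
    apply h2.congr'
    filter_upwards [eventually_ge_atTop (i+1)] with N hN
    exact h3 N hN
  exact tendsto_nhds_unique h4 tendsto_const_nhds

variable [CompleteSpace X]

/-- Basis constant: uniform bound on the adjoint partial-sum projections. -/
lemma basis_const (c : ℕ → X) (cs : ℕ → (X →L[ℝ] ℝ))
    (hexp : ∀ x : X, Tendsto (fun N => ∑ n ∈ Finset.range N, cs n x • c n) atTop (𝓝 x)) :
    ∃ K : ℝ, 1 ≤ K ∧ ∀ (φ : X →L[ℝ] ℝ) (N : ℕ),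
      ‖∑ n ∈ Finset.range N, φ (c n) • cs n‖ ≤ K * ‖φ‖ := by
  set P : ℕ → X →L[ℝ] X := fun N => ∑ n ∈ Finset.range N, (cs n).smulRight (c n) with hP
  have hPapp : ∀ N x, P N x = ∑ n ∈ Finset.range N, cs n x • c n := by
    intro N x
    simp [hP, ContinuousLinearMap.sum_apply]
  have hbdd : ∀ x, ∃ C, ∀ N, ‖P N x‖ ≤ C := by
    intro x
    have : Tendsto (fun N => ‖P N x‖) atTop (𝓝 ‖x‖) := by
      have := (hexp x).norm
      apply this.congr
      intro N; rw [hPapp]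
    obtain ⟨C, hC⟩ := this.bddAbove_range
    exact ⟨C, fun N => hC ⟨N, rfl⟩⟩
  obtain ⟨K₀, hK₀⟩ := banach_steinhaus hbdd
  refine ⟨max K₀ 1, le_max_right _ _, ?_⟩
  intro φ N
  apply ContinuousLinearMap.opNorm_le_bound _ (by positivity) _
  intro x
  have heq : (∑ n ∈ Finset.range N, φ (c n) • cs n) x = φ (P N x) := by
    rw [hPapp, map_sum]
    simp only [ContinuousLinearMap.sum_apply, ContinuousLinearMap.coe_smul',
      Pi.smul_apply, smul_eq_mul, map_smul]
    apply Finset.sum_congr rfl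
    intro n _; ring
  rw [heq]
  calc ‖φ (P N x)‖ ≤ ‖φ‖ * ‖P N x‖ := φ.le_opNorm _
    _ ≤ ‖φ‖ * (K₀ * ‖x‖) := by
        apply mul_le_mul_of_nonneg_left _ (norm_nonneg _)
        exact le_trans ((P N).le_opNorm x) (mul_le_mul_of_nonneg_right (hK₀ N) (norm_nonneg _))
    _ ≤ max K₀ 1 * ‖φ‖ * ‖x‖ := by
        have h1 : K₀ ≤ max K₀ 1 := le_max_left _ _
        rw [show max K₀ 1 * ‖φ‖ * ‖x‖ = ‖φ‖ * (max K₀ 1 * ‖x‖) by ring]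
        exact mul_le_mul_of_nonneg_left
          (mul_le_mul_of_nonneg_right h1 (norm_nonneg x)) (norm_nonneg φ)

/-- Coordinate projection bound: for finitely supported coefficient sequences,
truncated sums of `∑ aₙ csₙ` are controlled by the full (finite) sum. -/
lemma coord_proj (c : ℕ → X) (cs : ℕ → (X →L[ℝ] ℝ))
    (hbi : ∀ i j, cs i (c j) = if i = j then 1 else 0)
    {K : ℝ} (hK : ∀ (φ : X →L[ℝ] ℝ) (N : ℕ),
      ‖∑ n ∈ Finset.range N, φ (c n) • cs n‖ ≤ K * ‖φ‖)
    (a : ℕ → ℝ) (L : ℕ) (haL : ∀ n, L ≤ n → a n = 0) (M : ℕ) :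
    ‖∑ n ∈ Finset.range M, a n • cs n‖ ≤ K * ‖∑ n ∈ Finset.range L, a n • cs n‖ := by
  set φ : X →L[ℝ] ℝ := ∑ n ∈ Finset.range L, a n • cs n with hφ
  have hφc : ∀ k, φ (c k) = a k := by
    intro k
    rw [hφ]
    simp only [ContinuousLinearMap.sum_apply, ContinuousLinearMap.coe_smul', Pi.smul_apply,
      smul_eq_mul]
    have : ∀ n ∈ Finset.range L, a n * cs n (c k) = if n = k then a n else 0 := by
      intro n _
      rw [hbi n k]
      by_cases h : n = k <;> simp [h]
    rw [Finset.sum_congr rfl this, Finset.sum_ite_eq' (Finset.range L) k (fun n => a n)]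
    by_cases h : k ∈ Finset.range L
    · simp [h]
    · simp only [h, if_neg h]
      exact (haL k (Nat.le_of_not_lt (fun hlt => h (Finset.mem_range.2 hlt)))).symm
  have : ∑ n ∈ Finset.range M, a n • cs n = ∑ n ∈ Finset.range M, φ (c n) • cs n := by
    apply Finset.sum_congr rfl
    intro n _; rw [hφc n]
  rw [this]
  exact hK φ M



/-- Finite-dimensional lower bound: on the first `M` coordinates, the `ℓ²` norm of the
coefficients is controlled by the norm of the functional. -/
lemma fd_lower (c : ℕ → X) (cs : ℕ → (X →L[ℝ] ℝ))
    (hbi : ∀ i j, cs i (c j) = if i = j then 1 else 0) (M : ℕ) :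
    ∃ B : ℝ, 0 ≤ B ∧ ∀ a : ℕ → ℝ,
      Real.sqrt (∑ n ∈ Finset.range M, a n ^ 2) ≤ B * ‖∑ n ∈ Finset.range M, a n • cs n‖ := by
  classical
  let f : @LinearMap ℝ ℝ _ _ (RingHom.id ℝ) (Fin M → ℝ) (X →L[ℝ] ℝ) _
      (SeminormedAddCommGroup.toAddCommGroup.toAddCommMonoid) _ (NormedSpace.toModule) :=
    { toFun := fun t => ∑ i : Fin M, t i • cs (i : ℕ)
      map_add' := by intro t u; simp [add_smul, Finset.sum_add_distrib]
      map_smul' := by intro r t; simp [smul_smul, Finset.smul_sum] }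
  have hfapp : ∀ (t : Fin M → ℝ) (x : X), f t x = ∑ i : Fin M, t i * cs (i : ℕ) x := by
    intro t x
    show (∑ i : Fin M, t i • cs (i : ℕ)) x = _
    simp [ContinuousLinearMap.sum_apply]
  have hcoef : ∀ (t : Fin M → ℝ) (j : Fin M), f t (c (j : ℕ)) = t j := by
    intro t j
    rw [hfapp]
    have : ∀ i : Fin M, t i * cs (i:ℕ) (c (j:ℕ)) = if i = j then t i else 0 := by
      intro i
      rw [hbi]
      by_cases h : i = j
      · simp [h]
      · have : ((i:ℕ) = (j:ℕ)) = False := by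
          simp [Fin.val_inj, h]
        simp [this, h]
    rw [Finset.sum_congr rfl (fun i _ => this i),
      Finset.sum_ite_eq' Finset.univ j (fun i => t i)]
    simp
  have hinj : Function.Injective f := by
    rw [← LinearMap.ker_eq_bot, LinearMap.ker_eq_bot']
    intro t ht
    funext j
    have := hcoef t j
    rw [ht] at this
    simpa using this.symm
  let e := LinearEquiv.ofInjective f hinj
  let g : ↥(LinearMap.range f) →ₗ[ℝ] (Fin M → ℝ) := e.symm.toLinearMap
  let G := LinearMap.toContinuousLinearMap g
  refine ⟨Real.sqrt M * ‖G‖, by positivity, ?_⟩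
  intro a
  set t : Fin M → ℝ := fun i => a (i : ℕ) with ht
  have h1 : ∑ n ∈ Finset.range M, a n ^ 2 = ∑ i : Fin M, t i ^ 2 := by
    rw [← Fin.sum_univ_eq_sum_range (fun n => a n ^ 2) M]
  have h2 : ∑ i : Fin M, t i ^ 2 ≤ (M : ℝ) * ‖t‖ ^ 2 := by
    calc ∑ i : Fin M, t i ^ 2 ≤ ∑ _i : Fin M, ‖t‖ ^ 2 := by
          apply Finset.sum_le_sum
          intro i _
          have := norm_le_pi_norm t i
          calc t i ^ 2 = ‖t i‖ ^ 2 := by rw [Real.norm_eq_abs, sq_abs]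
            _ ≤ ‖t‖ ^ 2 := by
                apply pow_le_pow_left₀ (norm_nonneg _) this
      _ = (M : ℝ) * ‖t‖ ^ 2 := by simp [Finset.sum_const, nsmul_eq_mul]
  have h3 : Real.sqrt (∑ n ∈ Finset.range M, a n ^ 2) ≤ Real.sqrt M * ‖t‖ := by
    rw [h1]
    calc Real.sqrt (∑ i : Fin M, t i ^ 2) ≤ Real.sqrt ((M:ℝ) * ‖t‖^2) := Real.sqrt_le_sqrt h2
      _ = Real.sqrt M * ‖t‖ := by
          rw [Real.sqrt_mul (by positivity), Real.sqrt_sq (norm_nonneg _)]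
  have hmem : f t ∈ LinearMap.range f := LinearMap.mem_range_self f t
  have h4 : t = G ⟨f t, hmem⟩ := by
    show t = e.symm ⟨f t, hmem⟩
    have : (⟨f t, hmem⟩ : ↥(LinearMap.range f)) = e t := rfl
    rw [this, e.symm_apply_apply]
  have h5 : ‖t‖ ≤ ‖G‖ * ‖f t‖ := by
    have h := G.le_opNorm ⟨f t, hmem⟩
    rw [← h4] at h
    exact h
  have h6 : f t = ∑ n ∈ Finset.range M, a n • cs n := by
    show ∑ i : Fin M, t i • cs (i:ℕ) = _
    rw [← Fin.sum_univ_eq_sum_range (fun n => a n • cs n) M]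
  calc Real.sqrt (∑ n ∈ Finset.range M, a n ^ 2) ≤ Real.sqrt M * ‖t‖ := h3
    _ ≤ Real.sqrt M * (‖G‖ * ‖f t‖) :=
        mul_le_mul_of_nonneg_left h5 (Real.sqrt_nonneg _)
    _ = Real.sqrt M * ‖G‖ * ‖∑ n ∈ Finset.range M, a n • cs n‖ := by rw [h6]; ring



lemma push_support (c : ℕ → X) (cs : ℕ → (X →L[ℝ] ℝ))
    (hbi : ∀ i j, cs i (c j) = if i = j then 1 else 0)
    {K : ℝ} (hK1 : 1 ≤ K)
    (hKb : ∀ (φ : X →L[ℝ] ℝ) (N : ℕ), ‖∑ n ∈ Finset.range N, φ (c n) • cs n‖ ≤ K * ‖φ‖)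
    (hbad : ∀ C : ℝ, ∃ L, ∃ a : ℕ → ℝ,
      C * ‖∑ n ∈ Finset.range L, a n • cs n‖ < Real.sqrt (∑ n ∈ Finset.range L, a n ^ 2))
    (M : ℕ) {δ : ℝ} (hδ : 0 < δ) :
    ∃ L, ∃ b : ℕ → ℝ, M < L ∧ (∀ n, n < M → b n = 0) ∧ (∀ n, L ≤ n → b n = 0) ∧
      (∑ n ∈ Finset.range L, b n ^ 2 = 1) ∧ ‖∑ n ∈ Finset.range L, b n • cs n‖ ≤ δ := by
  classical
  -- coordinate projection bound, inlined from coord_proj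
  have coord : ∀ (a : ℕ → ℝ) (L : ℕ), (∀ n, L ≤ n → a n = 0) → ∀ M',
      ‖∑ n ∈ Finset.range M', a n • cs n‖ ≤ K * ‖∑ n ∈ Finset.range L, a n • cs n‖ :=
    fun a L haL M' => coord_proj c cs hbi hKb a L haL M'
  obtain ⟨B, hB0, hB⟩ := fd_lower c cs hbi M
  set C : ℝ := max (Real.sqrt 2 * B * K + 1) (Real.sqrt 2 * (1 + K) / δ + 1) with hC
  have hC0 : 0 < C := by
    have : (0:ℝ) < Real.sqrt 2 * B * K + 1 := by positivity
    exact lt_of_lt_of_le this (le_max_left _ _)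
  have hC1 : Real.sqrt 2 * B * K < C := lt_of_lt_of_le (by linarith) (le_max_left _ _)
  have hC2 : Real.sqrt 2 * (1 + K) / δ < C := lt_of_lt_of_le (by linarith) (le_max_right _ _)
  obtain ⟨L, a, hCs⟩ := hbad C
  set u := ∑ n ∈ Finset.range L, a n • cs n with hu
  set s2 := ∑ n ∈ Finset.range L, a n ^ 2 with hs2
  set s := Real.sqrt s2 with hs
  have hs2nn : 0 ≤ s2 := Finset.sum_nonneg fun n _ => sq_nonneg _
  have hspos : 0 < s := lt_of_le_of_lt (by positivity) hCs
  -- truncated coefficients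
  set a' : ℕ → ℝ := fun n => if n < L then a n else 0 with ha'
  set L₀ : ℕ := max L (M + 1) with hL₀
  have hLL₀ : L ≤ L₀ := le_max_left _ _
  have hML₀ : M < L₀ := lt_of_lt_of_le (Nat.lt_succ_self M) (le_max_right _ _)
  have hsupp : ∀ n, L₀ ≤ n → a' n = 0 := by
    intro n hn
    have : ¬ n < L := by omega
    simp [ha', this]
  have ha'eq : ∀ N, L ≤ N → ∑ n ∈ Finset.range N, a' n • cs n = u := by
    intro N hN
    rw [hu, ← Finset.sum_subset (Finset.range_subset_range.2 hN)]
    · apply Finset.sum_congr rfl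
      intro n hn
      have : n < L := Finset.mem_range.1 hn
      simp [ha', this]
    · intro n _ hn
      have : ¬ n < L := by simpa using hn
      simp [ha', this]
  have ha'sq : ∑ n ∈ Finset.range L₀, a' n ^ 2 = s2 := by
    rw [hs2, ← Finset.sum_subset (Finset.range_subset_range.2 hLL₀)]
    · apply Finset.sum_congr rfl
      intro n hn
      have : n < L := Finset.mem_range.1 hn
      simp [ha', this]
    · intro n _ hn
      have : ¬ n < L := by simpa using hn
      simp [ha', this]
  -- the head part
  set w := ∑ n ∈ Finset.range M, a' n ^ 2 with hw
  have hwnn : 0 ≤ w := Finset.sum_nonneg fun n _ => sq_nonneg _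
  have hhead : Real.sqrt w ≤ B * K * ‖u‖ := by
    calc Real.sqrt w ≤ B * ‖∑ n ∈ Finset.range M, a' n • cs n‖ := hB a'
      _ ≤ B * (K * ‖∑ n ∈ Finset.range L₀, a' n • cs n‖) :=
          mul_le_mul_of_nonneg_left (coord a' L₀ hsupp M) hB0
      _ = B * K * ‖u‖ := by rw [ha'eq L₀ hLL₀]; ring
  have hus : ‖u‖ < s / C := by
    rw [lt_div_iff₀ hC0]
    calc ‖u‖ * C = C * ‖u‖ := by ring
      _ < s := hCs
  -- tail part q
  set q : ℕ → ℝ := fun n => if n < M then 0 else a' n with hq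
  have hqsq : ∑ n ∈ Finset.range L₀, q n ^ 2 = s2 - w := by
    have hsplit : ∀ n, a' n ^ 2 = (if n < M then a' n else 0) ^ 2 + q n ^ 2 := by
      intro n
      by_cases h : n < M <;> simp [hq, h]
    have h1 : ∑ n ∈ Finset.range L₀, (if n < M then a' n else 0) ^ 2 = w := by
      rw [hw, ← Finset.sum_subset (Finset.range_subset_range.2 hML₀.le)]
      · apply Finset.sum_congr rfl
        intro n hn
        have : n < M := Finset.mem_range.1 hn
        simp [this]
      · intro n _ hn
        have : ¬ n < M := by simpa using hn
        simp [this]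
    have := Finset.sum_congr rfl (fun n (_ : n ∈ Finset.range L₀) => hsplit n)
    rw [ha'sq] at this
    rw [Finset.sum_add_distrib, h1] at this
    linarith
  have hw2 : w ≤ s2 / 2 := by
    have h1 : Real.sqrt w ≤ B * K * (s / C) := by
      calc Real.sqrt w ≤ B * K * ‖u‖ := hhead
        _ ≤ B * K * (s / C) := by
            apply mul_le_mul_of_nonneg_left hus.le (by positivity)
    have h2 : B * K * (s / C) ≤ s / Real.sqrt 2 := by
      rw [show B * K * (s / C) = (B * K * s) / C by ring]
      rw [div_le_div_iff₀ hC0 (by positivity)]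
      calc B * K * s * Real.sqrt 2 = Real.sqrt 2 * B * K * s := by ring
        _ ≤ C * s := mul_le_mul_of_nonneg_right hC1.le hspos.le
        _ = s * C := by ring
    have h3 : Real.sqrt w ≤ s / Real.sqrt 2 := le_trans h1 h2
    have h4 : w = Real.sqrt w ^ 2 := (Real.sq_sqrt hwnn).symm
    have h5 : (s / Real.sqrt 2) ^ 2 = s2 / 2 := by
      rw [div_pow, Real.sq_sqrt (by norm_num : (0:ℝ) ≤ 2), Real.sq_sqrt hs2nn]
    rw [h4, ← h5]
    apply pow_le_pow_left₀ (Real.sqrt_nonneg _) h3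
  -- σ
  set σ2 := s2 - w with hσ2
  have hσ2pos : 0 < σ2 := by
    have : 0 < s2 := by
      have := Real.sq_sqrt hs2nn
      nlinarith [hspos]
    rw [hσ2]; linarith
  set σ := Real.sqrt σ2 with hσ
  have hσpos : 0 < σ := Real.sqrt_pos.2 hσ2pos
  have hσge : s / Real.sqrt 2 ≤ σ := by
    have h5 : (s / Real.sqrt 2) ^ 2 = s2 / 2 := by
      rw [div_pow, Real.sq_sqrt (by norm_num : (0:ℝ) ≤ 2), Real.sq_sqrt hs2nn]
    have : s / Real.sqrt 2 = Real.sqrt (s2 / 2) := by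
      rw [← h5, Real.sqrt_sq (by positivity)]
    rw [this, hσ]
    apply Real.sqrt_le_sqrt
    rw [hσ2]; linarith
  -- the functional for q
  have hqcs : ‖∑ n ∈ Finset.range L₀, q n • cs n‖ ≤ (1 + K) * ‖u‖ := by
    have hdecomp : ∑ n ∈ Finset.range L₀, a' n • cs n
        = ∑ n ∈ Finset.range L₀, (if n < M then a' n else 0) • cs n
          + ∑ n ∈ Finset.range L₀, q n • cs n := by
      rw [← Finset.sum_add_distrib]
      apply Finset.sum_congr rfl
      intro n _
      rw [← add_smul]
      congr 1
      by_cases h : n < M <;> simp [hq, h]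
    have hhd : ∑ n ∈ Finset.range L₀, (if n < M then a' n else 0) • cs n
        = ∑ n ∈ Finset.range M, a' n • cs n := by
      rw [← Finset.sum_subset (Finset.range_subset_range.2 hML₀.le)]
      · apply Finset.sum_congr rfl
        intro n hn
        have : n < M := Finset.mem_range.1 hn
        simp [this]
      · intro n _ hn
        have : ¬ n < M := by simpa using hn
        simp [this]
    have : ∑ n ∈ Finset.range L₀, q n • cs n = u - ∑ n ∈ Finset.range M, a' n • cs n := by
      rw [← ha'eq L₀ hLL₀, hdecomp, hhd]; abel
    rw [this]
    calc ‖u - ∑ n ∈ Finset.range M, a' n • cs n‖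
        ≤ ‖u‖ + ‖∑ n ∈ Finset.range M, a' n • cs n‖ := norm_sub_le _ _
      _ ≤ ‖u‖ + K * ‖u‖ := by
          have := coord a' L₀ hsupp M
          rw [ha'eq L₀ hLL₀] at this
          linarith
      _ = (1 + K) * ‖u‖ := by ring
  -- normalize
  refine ⟨L₀, fun n => q n / σ, hML₀, ?_, ?_, ?_, ?_⟩
  · intro n hn; simp [hq, hn]
  · intro n hn
    have h1 : a' n = 0 := hsupp n hn
    simp [hq, h1]
  · have : ∑ n ∈ Finset.range L₀, (q n / σ) ^ 2 = (∑ n ∈ Finset.range L₀, q n ^ 2) / σ2 := by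
      rw [Finset.sum_div]
      apply Finset.sum_congr rfl
      intro n _
      rw [div_pow, Real.sq_sqrt hσ2pos.le]
    rw [this, hqsq]
    exact div_self (ne_of_gt hσ2pos)
  · have heq : ∑ n ∈ Finset.range L₀, (q n / σ) • cs n
        = (σ⁻¹) • ∑ n ∈ Finset.range L₀, q n • cs n := by
      rw [Finset.smul_sum]
      apply Finset.sum_congr rfl
      intro n _
      rw [smul_smul, div_eq_inv_mul]
    have h1 := norm_smul (σ⁻¹) (∑ n ∈ Finset.range L₀, q n • cs n)
    rw [Real.norm_eq_abs, abs_of_pos (show (0:ℝ) < σ⁻¹ by positivity)] at h1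
    rw [heq, h1]
    calc σ⁻¹ * ‖∑ n ∈ Finset.range L₀, q n • cs n‖ ≤ σ⁻¹ * ((1 + K) * ‖u‖) :=
          mul_le_mul_of_nonneg_left hqcs (by positivity)
      _ ≤ σ⁻¹ * ((1 + K) * (s / C)) := by
          apply mul_le_mul_of_nonneg_left _ (by positivity)
          apply mul_le_mul_of_nonneg_left hus.le (by linarith)
      _ ≤ (s / Real.sqrt 2)⁻¹ * ((1 + K) * (s / C)) := by
          apply mul_le_mul_of_nonneg_right _ (by positivity)
          apply inv_anti₀ (by positivity) hσge
      _ = Real.sqrt 2 * (1 + K) / C := by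
          field_simp
      _ ≤ δ := by
          rw [div_le_iff₀ hC0]
          have hd2 : Real.sqrt 2 * (1 + K) / δ < C := hC2
          rw [div_lt_iff₀ hδ] at hd2
          linarith [mul_le_mul_of_nonneg_left hd2.le hδ.le]


variable [CompleteSpace X]

/-- Uniform Besselian constant, obtained by a gliding-hump argument. -/
lemma besselian_const (c : ℕ → X) (cs : ℕ → (X →L[ℝ] ℝ))
    (hbi : ∀ i j, cs i (c j) = if i = j then 1 else 0)
    {K : ℝ} (hK1 : 1 ≤ K)
    (hKb : ∀ (φ : X →L[ℝ] ℝ) (N : ℕ), ‖∑ n ∈ Finset.range N, φ (c n) • cs n‖ ≤ K * ‖φ‖)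
    (hbess : ∀ a : ℕ → ℝ,
      (∃ φ : X →L[ℝ] ℝ, Tendsto (fun N => ∑ n ∈ Finset.range N, a n • cs n) atTop (𝓝 φ)) →
      Summable (fun n => (a n) ^ 2)) :
    ∃ C : ℝ, 0 ≤ C ∧ ∀ (L : ℕ) (a : ℕ → ℝ),
      Real.sqrt (∑ n ∈ Finset.range L, a n ^ 2) ≤ C * ‖∑ n ∈ Finset.range L, a n • cs n‖ := by
  classical
  by_contra hno
  push_neg at hno
  have hbad : ∀ C : ℝ, ∃ L, ∃ a : ℕ → ℝ,
      C * ‖∑ n ∈ Finset.range L, a n • cs n‖ < Real.sqrt (∑ n ∈ Finset.range L, a n ^ 2) := by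
    intro C
    rcases le_or_gt 0 C with h | h
    · obtain ⟨L, a, hla⟩ := hno C h
      exact ⟨L, a, lt_of_not_ge (fun hle => absurd hle (not_le.2 hla))⟩
    · obtain ⟨L, a, hla⟩ := hno 0 le_rfl
      refine ⟨L, a, lt_of_le_of_lt ?_ hla⟩
      have := norm_nonneg (∑ n ∈ Finset.range L, a n • cs n)
      nlinarith
  have pick : ∀ (M k : ℕ), ∃ p : ℕ × (ℕ → ℝ), M < p.1 ∧ (∀ n, n < M → p.2 n = 0) ∧
      (∀ n, p.1 ≤ n → p.2 n = 0) ∧ (∑ n ∈ Finset.range p.1, p.2 n ^ 2 = 1) ∧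
      ‖∑ n ∈ Finset.range p.1, p.2 n • cs n‖ ≤ (1/2 : ℝ)^k := by
    intro M k
    obtain ⟨L, b, h1, h2, h3, h4, h5⟩ :=
      push_support c cs hbi hK1 hKb hbad M (show (0:ℝ) < (1/2:ℝ)^k by positivity)
    exact ⟨(L, b), h1, h2, h3, h4, h5⟩
  choose F hF1 hF2 hF3 hF4 hF5 using pick
  set recf : ℕ → ℕ × (ℕ → ℝ) :=
    fun k => Nat.rec (F 0 0) (fun k ih => F ih.1 (k+1)) k with hrecf
  set M : ℕ → ℕ := fun k => Nat.rec 0 (fun j _ => (recf j).1) k with hM_def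
  set A : ℕ → ℕ → ℝ := fun k => (recf k).2 with hA_def
  have hrec_eq : ∀ k, recf k = F (M k) k := by
    intro k
    cases k with
    | zero => rfl
    | succ j => rfl
  have hMsucc : ∀ k, M (k+1) = (F (M k) k).1 := by
    intro k
    show (recf k).1 = _
    rw [hrec_eq k]
  have hAk : ∀ k, A k = (F (M k) k).2 := by
    intro k
    show (recf k).2 = _
    rw [hrec_eq k]
  have hMlt : ∀ k, M k < M (k+1) := by
    intro k; rw [hMsucc]; exact hF1 (M k) k
  have hMono : StrictMono M := strictMono_nat_of_lt_succ hMlt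
  have hA1 : ∀ k n, n < M k → A k n = 0 := by
    intro k n hn; rw [hAk]; exact hF2 (M k) k n hn
  have hA2 : ∀ k n, M (k+1) ≤ n → A k n = 0 := by
    intro k n hn; rw [hAk]; exact hF3 (M k) k n (by rwa [← hMsucc])
  have hA3 : ∀ k, ∑ n ∈ Finset.range (M (k+1)), A k n ^ 2 = 1 := by
    intro k; rw [hAk, hMsucc]; exact hF4 (M k) k
  have hA4 : ∀ k, ‖∑ n ∈ Finset.range (M (k+1)), A k n • cs n‖ ≤ (1/2:ℝ)^k := by
    intro k; rw [hAk, hMsucc]; exact hF5 (M k) k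
  have hMk : ∀ k, k ≤ M k := by
    intro k
    induction k with
    | zero => exact Nat.zero_le _
    | succ j ih => exact Nat.succ_le_of_lt (lt_of_le_of_lt ih (hMlt j))
  set a : ℕ → ℝ := fun n => ∑ k ∈ Finset.range (n+1), A k n with ha_def
  have hblock : ∀ k n, M k ≤ n → n < M (k+1) → a n = A k n := by
    intro k n h1 h2
    rw [ha_def]
    apply Finset.sum_eq_single_of_mem k
    · exact Finset.mem_range.2 (Nat.lt_succ_of_le (le_trans (hMk k) h1))
    · intro j _ hj
      rcases lt_or_gt_of_ne hj with hlt | hgt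
      · exact hA2 j n (le_trans (hMono.monotone (Nat.succ_le_of_lt hlt)) h1)
      · exact hA1 j n (lt_of_lt_of_le h2 (hMono.monotone hgt))
  set T : ℕ → ℕ → (X →L[ℝ] ℝ) :=
    fun k N => ∑ n ∈ Finset.range N, A k n • cs n with hT_def
  have hT1 : ∀ k N, ‖T k N‖ ≤ K * (1/2:ℝ)^k := by
    intro k N
    calc ‖T k N‖ ≤ K * ‖T k (M (k+1))‖ := coord_proj c cs hbi hKb (A k) (M (k+1)) (hA2 k) N
      _ ≤ K * (1/2:ℝ)^k := mul_le_mul_of_nonneg_left (hA4 k) (by linarith)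
  have hT2 : ∀ k N, M (k+1) ≤ N → T k N = T k (M (k+1)) := by
    intro k N hN
    rw [hT_def]
    refine (Finset.sum_subset (Finset.range_subset_range.2 hN) ?_).symm
    intro n _ hn
    rw [hA2 k n (Nat.le_of_not_lt (fun h => hn (Finset.mem_range.2 h))), zero_smul]
  have hT3 : ∀ k N, N ≤ M k → T k N = 0 := by
    intro k N hN
    apply Finset.sum_eq_zero
    intro n hn
    rw [hA1 k n (lt_of_lt_of_le (Finset.mem_range.1 hn) hN), zero_smul]
  have hS : ∀ N, ∑ n ∈ Finset.range N, a n • cs n = ∑ k ∈ Finset.range N, T k N := by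
    intro N
    have step1 : ∀ n, a n • cs n = ∑ k ∈ Finset.range (n+1), A k n • cs n := by
      intro n
      rw [ha_def]
      rw [Finset.sum_smul]
    have step2 : ∀ n, n < N → ∑ k ∈ Finset.range (n+1), A k n • cs n
        = ∑ k ∈ Finset.range N, A k n • cs n := by
      intro n hn
      apply Finset.sum_subset (Finset.range_subset_range.2 (Nat.succ_le_of_lt hn))
      intro k _ hk
      have hkn : n < k := by
        by_contra h
        exact hk (Finset.mem_range.2 (Nat.lt_succ_of_le (Nat.le_of_not_lt h)))
      rw [hA1 k n (lt_of_lt_of_le hkn (hMk k)), zero_smul]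
    calc ∑ n ∈ Finset.range N, a n • cs n
        = ∑ n ∈ Finset.range N, ∑ k ∈ Finset.range N, A k n • cs n := by
          apply Finset.sum_congr rfl
          intro n hn
          rw [step1 n, step2 n (Finset.mem_range.1 hn)]
      _ = ∑ k ∈ Finset.range N, T k N := by
          rw [Finset.sum_comm]
  -- key Cauchy estimate
  have hkey : ∀ (k₀ N N' : ℕ), M k₀ ≤ N → N ≤ N' →
      ‖(∑ n ∈ Finset.range N', a n • cs n) - ∑ n ∈ Finset.range N, a n • cs n‖
        ≤ 4 * K * (1/2:ℝ)^k₀ := by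
    intro k₀ N N' hk₀N hNN'
    have hk₀N' : k₀ ≤ N' := le_trans (le_trans (hMk k₀) hk₀N) hNN'
    have ext : ∑ k ∈ Finset.range N, T k N = ∑ k ∈ Finset.range N', T k N := by
      apply Finset.sum_subset (Finset.range_subset_range.2 hNN')
      intro k _ hk
      have : N ≤ k := Nat.le_of_not_lt (fun h => hk (Finset.mem_range.2 h))
      exact hT3 k N (le_trans this (hMk k))
    have hdiff : (∑ n ∈ Finset.range N', a n • cs n) - ∑ n ∈ Finset.range N, a n • cs n
        = ∑ k ∈ Finset.Ico k₀ N', (T k N' - T k N) := by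
      rw [hS, hS, ext, ← Finset.sum_sub_distrib]
      rw [Finset.range_eq_Ico, ← Finset.sum_Ico_consecutive _ (Nat.zero_le k₀) hk₀N']
      have : ∑ k ∈ Finset.Ico 0 k₀, (T k N' - T k N) = 0 := by
        apply Finset.sum_eq_zero
        intro k hk
        have hkk₀ : k < k₀ := (Finset.mem_Ico.1 hk).2
        have h1 : M (k+1) ≤ N := le_trans (hMono.monotone (Nat.succ_le_of_lt hkk₀)) hk₀N
        rw [hT2 k N' (le_trans h1 hNN'), hT2 k N h1, sub_self]
      rw [this, zero_add]
    rw [hdiff]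
    calc ‖∑ k ∈ Finset.Ico k₀ N', (T k N' - T k N)‖
        ≤ ∑ k ∈ Finset.Ico k₀ N', ‖T k N' - T k N‖ := norm_sum_le _ _
      _ ≤ ∑ k ∈ Finset.Ico k₀ N', (2 * K * (1/2:ℝ)^k) := by
          apply Finset.sum_le_sum
          intro k _
          calc ‖T k N' - T k N‖ ≤ ‖T k N'‖ + ‖T k N‖ := norm_sub_le _ _
            _ ≤ K * (1/2:ℝ)^k + K * (1/2:ℝ)^k := add_le_add (hT1 k N') (hT1 k N)
            _ = 2 * K * (1/2:ℝ)^k := by ring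
      _ = 2 * K * ∑ k ∈ Finset.Ico k₀ N', (1/2:ℝ)^k := by
          rw [Finset.mul_sum]
      _ ≤ 2 * K * ((1/2:ℝ)^k₀ * 2) := by
          apply mul_le_mul_of_nonneg_left _ (by linarith)
          rw [Finset.sum_Ico_eq_sum_range]
          have : ∀ i ∈ Finset.range (N' - k₀), (1/2:ℝ)^(k₀ + i) = (1/2:ℝ)^k₀ * (1/2:ℝ)^i := by
            intro i _; rw [pow_add]
          rw [Finset.sum_congr rfl this, ← Finset.mul_sum]
          exact mul_le_mul_of_nonneg_left (sum_geometric_two_le _) (by positivity)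
      _ = 4 * K * (1/2:ℝ)^k₀ := by ring
  -- Cauchy sequence
  set cfun : ℕ → ℕ := fun N => Nat.findGreatest (fun k => M k ≤ N) N with hcfun
  have hcf1 : ∀ N, M (cfun N) ≤ N := by
    intro N
    exact Nat.findGreatest_spec (P := fun k => M k ≤ N) (Nat.zero_le N) (by simp [hM_def])
  have hcf2 : ∀ k N, M k ≤ N → k ≤ cfun N := by
    intro k N hkN
    exact Nat.le_findGreatest (le_trans (hMk k) hkN) hkN
  have hcauchy : CauchySeq (fun N => ∑ n ∈ Finset.range N, a n • cs n) := by
    apply cauchySeq_of_le_tendsto_0 (fun N => 4 * K * (1/2:ℝ)^(cfun N))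
    · intro n m N hn hm
      rw [dist_eq_norm]
      rcases le_total n m with h | h
      · rw [norm_sub_rev]
        exact hkey (cfun N) n m (le_trans (hcf1 N) hn) h
      · exact hkey (cfun N) m n (le_trans (hcf1 N) hm) h
    · have hcft : Tendsto cfun atTop atTop := by
        apply tendsto_atTop.2
        intro k
        filter_upwards [eventually_ge_atTop (M k)] with N hN
        exact hcf2 k N hN
      have h2 : Tendsto (fun N => ((1:ℝ)/2)^(cfun N)) atTop (𝓝 0) :=
        (tendsto_pow_atTop_nhds_zero_of_lt_one (by norm_num) (by norm_num)).comp hcft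
      have := h2.const_mul (4*K)
      simpa using this
  obtain ⟨φ, hφ⟩ := cauchySeq_tendsto_of_complete hcauchy
  have hsummable := hbess a ⟨φ, hφ⟩
  -- contradiction
  have hparts : ∀ KK : ℕ, ∑ n ∈ Finset.range (M KK), a n ^ 2 = KK := by
    intro KK
    induction KK with
    | zero => simp [hM_def]
    | succ j ih =>
      rw [← Finset.sum_range_add_sum_Ico _ (hMono.monotone (Nat.le_succ j)), ih]
      have : ∑ n ∈ Finset.Ico (M j) (M (j+1)), a n ^ 2
          = ∑ n ∈ Finset.Ico (M j) (M (j+1)), A j n ^ 2 := by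
        apply Finset.sum_congr rfl
        intro n hn
        obtain ⟨h1, h2⟩ := Finset.mem_Ico.1 hn
        rw [hblock j n h1 h2]
      rw [this, Finset.sum_Ico_eq_sub _ (hMono.monotone (Nat.le_succ j)), hA3]
      have : ∑ n ∈ Finset.range (M j), A j n ^ 2 = 0 := by
        apply Finset.sum_eq_zero
        intro n hn
        rw [hA1 j n (Finset.mem_range.1 hn)]
        ring
      rw [this]
      push_cast
      ring
  obtain ⟨KK, hKK⟩ := exists_nat_gt (∑' n, a n ^ 2)
  have : (KK : ℝ) ≤ ∑' n, a n ^ 2 := by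
    rw [← hparts KK]
    exact hsummable.sum_le_tsum _ (fun n _ => sq_nonneg _)
  linarith

/-- Uniform bound on coefficient functionals, via Banach–Steinhaus. -/
lemma coeff_bound (cs : ℕ → (X →L[ℝ] ℝ))
    (hsq : ∀ x : X, Summable (fun n => (cs n x) ^ 2)) :
    ∃ K : ℝ, 0 ≤ K ∧ ∀ (x : X) (N : ℕ),
      Real.sqrt (∑ n ∈ Finset.range N, (cs n x) ^ 2) ≤ K * ‖x‖ := by
  classical
  set ι := {p : ℕ × (ℕ → ℝ) // ∑ n ∈ Finset.range p.1, (p.2 n)^2 ≤ 1} with hι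
  set g : ι → (X →L[ℝ] ℝ) := fun p => ∑ n ∈ Finset.range p.1.1, p.1.2 n • cs n with hg
  have hgapp : ∀ (p : ι) (x : X), g p x = ∑ n ∈ Finset.range p.1.1, p.1.2 n * cs n x := by
    intro p x
    rw [hg]
    simp [ContinuousLinearMap.sum_apply]
  have hpt : ∀ x : X, ∃ C, ∀ p : ι, ‖g p x‖ ≤ C := by
    intro x
    refine ⟨Real.sqrt (∑' n, (cs n x)^2), ?_⟩
    intro p
    rw [hgapp, Real.norm_eq_abs]
    calc |∑ n ∈ Finset.range p.1.1, p.1.2 n * cs n x|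
        ≤ Real.sqrt (∑ n ∈ Finset.range p.1.1, (p.1.2 n)^2)
          * Real.sqrt (∑ n ∈ Finset.range p.1.1, (cs n x)^2) := abs_sum_mul_le _ _ _
      _ ≤ 1 * Real.sqrt (∑' n, (cs n x)^2) := by
          apply mul_le_mul
          · exact Real.sqrt_le_one.2 p.2
          · exact Real.sqrt_le_sqrt ((hsq x).sum_le_tsum _ (fun n _ => sq_nonneg _))
          · positivity
          · norm_num
      _ = Real.sqrt (∑' n, (cs n x)^2) := one_mul _
  obtain ⟨K₀, hK₀⟩ := banach_steinhaus hpt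
  refine ⟨max K₀ 0, le_max_right _ _, ?_⟩
  intro x N
  set s2 := ∑ n ∈ Finset.range N, (cs n x) ^ 2 with hs2
  have hs2nn : 0 ≤ s2 := Finset.sum_nonneg fun n _ => sq_nonneg _
  rcases eq_or_lt_of_le hs2nn with h0 | hpos
  · rw [← h0, Real.sqrt_zero]
    positivity
  · set s := Real.sqrt s2 with hs
    have hspos : 0 < s := Real.sqrt_pos.2 hpos
    set b : ℕ → ℝ := fun n => cs n x / s with hb
    have hble : ∑ n ∈ Finset.range N, (b n)^2 ≤ 1 := by
      have : ∑ n ∈ Finset.range N, (b n)^2 = s2 / s^2 := by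
        rw [Finset.sum_div]
        apply Finset.sum_congr rfl
        intro n _
        rw [hb, div_pow]
      rw [this, Real.sq_sqrt hs2nn, div_self (ne_of_gt hpos)]
    set p : ι := ⟨(N, b), hble⟩ with hp
    have happ : g p x = s := by
      rw [hgapp]
      show ∑ n ∈ Finset.range N, (cs n x / s) * cs n x = s
      have : ∀ n ∈ Finset.range N, (cs n x / s) * cs n x = (cs n x)^2 / s := by
        intro n _; ring
      rw [Finset.sum_congr rfl this, ← Finset.sum_div, ← hs2]
      rw [show s2 = s * s by rw [hs, Real.mul_self_sqrt hs2nn]]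
      field_simp
    calc Real.sqrt s2 = s := rfl
      _ = ‖g p x‖ := by rw [happ, Real.norm_eq_abs, abs_of_pos hspos]
      _ ≤ ‖g p‖ * ‖x‖ := (g p).le_opNorm x
      _ ≤ max K₀ 0 * ‖x‖ :=
          mul_le_mul_of_nonneg_right (le_trans (hK₀ p) (le_max_left _ _)) (norm_nonneg _)

/-- Convergence criterion from square-summability plus a uniform block estimate. -/
lemma converge_of_sq_bound {W : Type*} [NormedAddCommGroup W] [NormedSpace ℝ W]
    [CompleteSpace W] (w : ℕ → W) (a : ℕ → ℝ)
    (hsum : Summable (fun n => a n ^ 2)) {K : ℝ} (hK0 : 0 ≤ K)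
    (hbd : ∀ N M' : ℕ, N ≤ M' → ‖∑ n ∈ Finset.Ico N M', a n • w n‖
      ≤ K * Real.sqrt (∑ n ∈ Finset.Ico N M', a n ^ 2)) :
    ∃ x, Tendsto (fun N => ∑ n ∈ Finset.range N, a n • w n) atTop (𝓝 x) := by
  set t := ∑' n, a n ^ 2 with ht
  set s : ℕ → ℝ := fun N => ∑ n ∈ Finset.range N, a n ^ 2 with hsdef
  have hmono : Monotone s := fun m n hmn =>
    Finset.sum_le_sum_of_subset_of_nonneg (Finset.range_subset_range.2 hmn) fun i _ _ => sq_nonneg _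
  have hst : ∀ N, s N ≤ t := fun N => hsum.sum_le_tsum _ (fun n _ => sq_nonneg _)
  apply cauchySeq_tendsto_of_complete
  apply cauchySeq_of_le_tendsto_0 (fun N => K * Real.sqrt (t - s N))
  · intro n m N hn hm
    rw [dist_eq_norm]
    have key : ∀ p q : ℕ, N ≤ p → p ≤ q →
        ‖(∑ k ∈ Finset.range q, a k • w k) - ∑ k ∈ Finset.range p, a k • w k‖
          ≤ K * Real.sqrt (t - s N) := by
      intro p q hNp hpq
      have h1 : (∑ k ∈ Finset.range q, a k • w k) - ∑ k ∈ Finset.range p, a k • w k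
          = ∑ k ∈ Finset.Ico p q, a k • w k := (Finset.sum_Ico_eq_sub _ hpq).symm
      rw [h1]
      calc ‖∑ k ∈ Finset.Ico p q, a k • w k‖
          ≤ K * Real.sqrt (∑ k ∈ Finset.Ico p q, a k ^ 2) := hbd p q hpq
        _ ≤ K * Real.sqrt (t - s N) := by
            apply mul_le_mul_of_nonneg_left _ hK0
            apply Real.sqrt_le_sqrt
            have : ∑ k ∈ Finset.Ico p q, a k ^ 2 = s q - s p := Finset.sum_Ico_eq_sub _ hpq
            rw [this]
            have := hst q
            have := hmono hNp
            linarith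
    rcases le_total n m with h | h
    · rw [norm_sub_rev]
      exact key n m hn h
    · exact key m n hm h
  · have h1 : Tendsto s atTop (𝓝 t) := hsum.hasSum.tendsto_sum_nat
    have h2 : Tendsto (fun N => t - s N) atTop (𝓝 0) := by
      have := h1.const_sub t
      simpa using this
    have h3 : Tendsto (fun N => Real.sqrt (t - s N)) atTop (𝓝 0) := by
      have := (Real.continuous_sqrt.tendsto 0).comp h2
      simpa using (by exact this : Tendsto (fun N => Real.sqrt (t - s N)) atTop (𝓝 (Real.sqrt 0)))
    have := h3.const_mul K
    simpa using this

end Aux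

lemma convergesOn_univ_iff {W : Type*} [NormedAddCommGroup W] [NormedSpace ℝ W]
    {a : ℕ → ℝ} {v : ℕ → W} {x : W} :
    ConvergesOn Set.univ a v x ↔
      Tendsto (fun N => ∑ n ∈ Finset.range N, a n • v n) atTop (𝓝 x) := by
  have h : partialSumOn Set.univ a v = fun N => ∑ n ∈ Finset.range N, a n • v n := by
    funext N
    unfold partialSumOn
    simp
  rw [ConvergesOn, h]


theorem stmt8 {X : Type*} [NormedAddCommGroup X] [NormedSpace ℝ X] [CompleteSpace X]
    (c : ℕ → X) (hc : IsSchauderBasis c)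
    (cs : ℕ → (X →L[ℝ] ℝ))
    (hbi : ∀ i j, cs i (c j) = if i = j then 1 else 0)
    (hexp : ∀ x : X, Tendsto (fun N => ∑ n ∈ Finset.range N, cs n x • c n) atTop (𝓝 x))
    (hbasic : IsSchauderBasisOn Set.univ cs
      (((Submodule.span ℝ (Set.range cs)).topologicalClosure :
        Submodule ℝ (X →L[ℝ] ℝ)) : Set (X →L[ℝ] ℝ))) :
    (HilbertianOn Set.univ c ↔ BesselianOn Set.univ cs) ∧
    (BesselianOn Set.univ c ↔ HilbertianOn Set.univ cs)  := by
  classical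
  have vac : ∀ (b : ℕ → ℝ) (n : ℕ), n ∉ (Set.univ : Set ℕ) → b n = 0 :=
    fun b n hn => absurd (Set.mem_univ n) hn
  obtain ⟨K, hK1, hKb⟩ := basis_const c cs hexp
  have hIcoSub : ∀ N M' : ℕ, Finset.Ico N M' ⊆ Finset.range M' := by
    intro N M' i hi
    exact Finset.mem_range.2 (Finset.mem_Ico.1 hi).2
  constructor
  · constructor
    · -- (A) Hilbertian c → Besselian cs
      rintro hhil a _ ⟨φ, hφ⟩
      rw [convergesOn_univ_iff] at hφ
      apply landau
      intro b hb
      obtain ⟨x, hx⟩ := hhil b (vac b) hb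
      rw [convergesOn_univ_iff] at hx
      refine ⟨φ x, ?_⟩
      have hev := ((ContinuousLinearMap.apply ℝ ℝ x).continuous.tendsto φ).comp hφ
      refine Tendsto.congr ?_ hev
      intro N
      show (∑ n ∈ Finset.range N, a n • cs n) x = ∑ n ∈ Finset.range N, a n * b n
      rw [ContinuousLinearMap.sum_apply]
      apply Finset.sum_congr rfl
      intro n _
      rw [ContinuousLinearMap.coe_smul', Pi.smul_apply, smul_eq_mul,
        coeff_eq c cs hbi hx n]
    · -- (B) Besselian cs → Hilbertian c
      intro hbess a _ hsum
      obtain ⟨C, hC0, hC⟩ := besselian_const c cs hbi hK1 hKb (fun b hb => by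
        obtain ⟨φ, hφ⟩ := hb
        exact hbess b (vac b) ⟨φ, convergesOn_univ_iff.2 hφ⟩)
      have hKpos : (0:ℝ) ≤ C * K := by positivity
      have hbd : ∀ N M' : ℕ, N ≤ M' → ‖∑ n ∈ Finset.Ico N M', a n • c n‖
          ≤ (C * K) * Real.sqrt (∑ n ∈ Finset.Ico N M', a n ^ 2) := by
        intro N M' hNM
        set x := ∑ n ∈ Finset.Ico N M', a n • c n with hxdef
        obtain ⟨φ, hφ1, hφ2⟩ := exists_dual_vector'' ℝ x
        have hφ2' : φ x = ‖x‖ := by exact_mod_cast hφ2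
        have hx : φ x = ∑ n ∈ Finset.Ico N M', a n * φ (c n) := by
          rw [hxdef, map_sum]
          apply Finset.sum_congr rfl
          intro n _
          rw [map_smul, smul_eq_mul]
        have hcs : Real.sqrt (∑ n ∈ Finset.Ico N M', (φ (c n)) ^ 2) ≤ C * K := by
          calc Real.sqrt (∑ n ∈ Finset.Ico N M', (φ (c n)) ^ 2)
              ≤ Real.sqrt (∑ n ∈ Finset.range M', (φ (c n)) ^ 2) := by
                apply Real.sqrt_le_sqrt
                exact Finset.sum_le_sum_of_subset_of_nonneg (hIcoSub N M')
                  (fun i _ _ => sq_nonneg _)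
            _ ≤ C * ‖∑ n ∈ Finset.range M', φ (c n) • cs n‖ := hC M' (fun n => φ (c n))
            _ ≤ C * (K * ‖φ‖) := mul_le_mul_of_nonneg_left (hKb φ M') hC0
            _ ≤ C * (K * 1) := by
                apply mul_le_mul_of_nonneg_left _ hC0
                exact mul_le_mul_of_nonneg_left hφ1 (by linarith)
            _ = C * K := by ring
        calc ‖x‖ = φ x := hφ2'.symm
          _ ≤ |φ x| := le_abs_self _
          _ = |∑ n ∈ Finset.Ico N M', a n * φ (c n)| := by rw [hx]
          _ ≤ Real.sqrt (∑ n ∈ Finset.Ico N M', a n ^ 2)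
              * Real.sqrt (∑ n ∈ Finset.Ico N M', (φ (c n)) ^ 2) := abs_sum_mul_le _ _ _
          _ ≤ Real.sqrt (∑ n ∈ Finset.Ico N M', a n ^ 2) * (C * K) :=
              mul_le_mul_of_nonneg_left hcs (Real.sqrt_nonneg _)
          _ = (C * K) * Real.sqrt (∑ n ∈ Finset.Ico N M', a n ^ 2) := by ring
      obtain ⟨x, hx⟩ := converge_of_sq_bound c a hsum hKpos hbd
      exact ⟨x, convergesOn_univ_iff.2 hx⟩
  · constructor
    · -- (C) Besselian c → Hilbertian cs
      intro hbess a _ hsum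
      have hsq : ∀ x : X, Summable (fun n => (cs n x) ^ 2) := by
        intro x
        exact hbess (fun n => cs n x) (vac _) ⟨x, convergesOn_univ_iff.2 (hexp x)⟩
      obtain ⟨K₂, hK₂0, hK₂⟩ := coeff_bound cs hsq
      have hbd : ∀ N M' : ℕ, N ≤ M' → ‖∑ n ∈ Finset.Ico N M', a n • cs n‖
          ≤ K₂ * Real.sqrt (∑ n ∈ Finset.Ico N M', a n ^ 2) := by
        intro N M' hNM
        apply ContinuousLinearMap.opNorm_le_bound _ (by positivity)
        intro x
        have happ : (∑ n ∈ Finset.Ico N M', a n • cs n) x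
            = ∑ n ∈ Finset.Ico N M', a n * cs n x := by
          rw [ContinuousLinearMap.sum_apply]
          apply Finset.sum_congr rfl
          intro n _
          rw [ContinuousLinearMap.coe_smul', Pi.smul_apply, smul_eq_mul]
        rw [happ, Real.norm_eq_abs]
        calc |∑ n ∈ Finset.Ico N M', a n * cs n x|
            ≤ Real.sqrt (∑ n ∈ Finset.Ico N M', a n ^ 2)
              * Real.sqrt (∑ n ∈ Finset.Ico N M', (cs n x) ^ 2) := abs_sum_mul_le _ _ _
          _ ≤ Real.sqrt (∑ n ∈ Finset.Ico N M', a n ^ 2) * (K₂ * ‖x‖) := by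
              apply mul_le_mul_of_nonneg_left _ (Real.sqrt_nonneg _)
              calc Real.sqrt (∑ n ∈ Finset.Ico N M', (cs n x) ^ 2)
                  ≤ Real.sqrt (∑ n ∈ Finset.range M', (cs n x) ^ 2) := by
                    apply Real.sqrt_le_sqrt
                    exact Finset.sum_le_sum_of_subset_of_nonneg (hIcoSub N M')
                      (fun i _ _ => sq_nonneg _)
                _ ≤ K₂ * ‖x‖ := hK₂ x M'
          _ = K₂ * Real.sqrt (∑ n ∈ Finset.Ico N M', a n ^ 2) * ‖x‖ := by ring
      obtain ⟨φ, hφ⟩ := converge_of_sq_bound cs a hsum hK₂0 hbd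
      exact ⟨φ, convergesOn_univ_iff.2 hφ⟩
    · -- (D) Hilbertian cs → Besselian c
      rintro hhil a _ ⟨x, hx⟩
      rw [convergesOn_univ_iff] at hx
      apply landau
      intro b hb
      obtain ⟨φ, hφ⟩ := hhil b (vac b) hb
      rw [convergesOn_univ_iff] at hφ
      refine ⟨φ x, ?_⟩
      have hev := ((ContinuousLinearMap.apply ℝ ℝ x).continuous.tendsto φ).comp hφ
      refine Tendsto.congr ?_ hev
      intro N
      show (∑ n ∈ Finset.range N, b n • cs n) x = ∑ n ∈ Finset.range N, a n * b n
      rw [ContinuousLinearMap.sum_apply]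
      apply Finset.sum_congr rfl
      intro n _
      rw [ContinuousLinearMap.coe_smul', Pi.smul_apply, smul_eq_mul,
        coeff_eq c cs hbi hx n]
      ring
end

section
/- A Banach space X with a Schauder basis (v_n) is reflexive if and only if (v_n) is both boundedly-complete and shrinking. -/
open Filter Topology Set

section AuxJames

variable {X : Type*} [NormedAddCommGroup X] [NormedSpace ℝ X]

/-- The basis projections as continuous linear maps. -/
noncomputable def basisProj (v : ℕ → X) (vs : ℕ → (X →L[ℝ] ℝ)) (N : ℕ) : X →L[ℝ] X :=
  ∑ n ∈ Finset.range N, (vs n).smulRight (v n)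

lemma basisProj_apply (v : ℕ → X) (vs : ℕ → (X →L[ℝ] ℝ)) (N : ℕ) (x : X) :
    basisProj v vs N x = ∑ n ∈ Finset.range N, vs n x • v n := by
  simp [basisProj]

/-- Coefficient extraction from finite partial sums in `X`. -/
lemma coeff_extract {v : ℕ → X} {vs : ℕ → (X →L[ℝ] ℝ)}
    (hbi : ∀ i j, vs i (v j) = if i = j then 1 else 0)
    (a : ℕ → ℝ) (j N : ℕ) :
    vs j (∑ n ∈ Finset.range N, a n • v n) = if j < N then a j else 0 := by
  rw [map_sum]
  simp only [map_smul, hbi, smul_eq_mul, mul_ite, mul_one, mul_zero]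
  rw [Finset.sum_ite_eq (Finset.range N) j a]
  simp [Finset.mem_range]

/-- Coefficient extraction from finite partial sums in the dual. -/
lemma coeff_extract' {v : ℕ → X} {vs : ℕ → (X →L[ℝ] ℝ)}
    (hbi : ∀ i j, vs i (v j) = if i = j then 1 else 0)
    (b : ℕ → ℝ) (j N : ℕ) :
    (∑ n ∈ Finset.range N, b n • vs n) (v j) = if j < N then b j else 0 := by
  rw [ContinuousLinearMap.sum_apply]
  simp only [ContinuousLinearMap.smul_apply, hbi, smul_eq_mul, mul_ite, mul_one, mul_zero]
  rw [Finset.sum_ite_eq' (Finset.range N) j b]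
  simp [Finset.mem_range]

lemma mapClusterPt_eq_of_tendsto {f : ℕ → ℝ} {r s : ℝ}
    (h : MapClusterPt r atTop f) (ht : Tendsto f atTop (𝓝 s)) : r = s :=
  eq_of_nhds_neBot (h.clusterPt.mono ht)

lemma mapClusterPt_le_of_forall {f : ℕ → ℝ} {r ε : ℝ}
    (h : MapClusterPt r atTop f) (hf : ∀ k, ε ≤ f k) : ε ≤ r := by
  have h1 : ClusterPt r (𝓟 (Ici ε)) := h.clusterPt.mono (le_principal_iff.2 (by
    exact mem_map.2 (by filter_upwards [] using fun k => hf k)))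
  have := mem_closure_iff_clusterPt.2 h1
  rwa [closure_Ici] at this

/-- Weak cluster point of a bounded sequence in a space with surjective double-dual map. -/
lemma exists_weak_cluster
    (hsurj : Function.Surjective ⇑(NormedSpace.inclusionInDoubleDual ℝ X))
    (u : ℕ → X) (C : ℝ) (hC : ∀ N, ‖u N‖ ≤ C) :
    ∃ x : X, ∀ φ : X →L[ℝ] ℝ, MapClusterPt (φ x) atTop (fun N => φ (u N)) := by
  classical
  set J := NormedSpace.inclusionInDoubleDual ℝ X with hJ
  let w : ℕ → WeakDual ℝ (StrongDual ℝ X) := fun N => J (u N)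
  have hw : ∀ N, w N ∈ (WeakDual.toStrongDual ⁻¹' Metric.closedBall 0 C) := by
    intro N
    simp only [Set.mem_preimage, Metric.mem_closedBall, dist_zero_right]
    have : ‖J (u N)‖ = ‖u N‖ :=
      (NormedSpace.inclusionInDoubleDualLi ℝ (E := X)).norm_map (u N)
    exact (dist_zero_right (J (u N) : StrongDual ℝ (StrongDual ℝ X))).le.trans (this.le.trans (hC N))
  have hcpt : IsCompact (WeakDual.toStrongDual ⁻¹'
      Metric.closedBall (0 : StrongDual ℝ (StrongDual ℝ X)) C) :=
    WeakDual.isCompact_closedBall (𝕜 := ℝ) 0 C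
  obtain ⟨F, -, hF⟩ := hcpt.exists_mapClusterPt (u := w) (f := atTop)
    (le_principal_iff.2 (mem_map.2 (by filter_upwards [] using hw)))
  obtain ⟨x, hx⟩ := hsurj (WeakDual.toStrongDual F)
  refine ⟨x, fun φ => ?_⟩
  have hev : Continuous fun ψ : WeakDual ℝ (StrongDual ℝ X) => ψ φ :=
    WeakDual.eval_continuous φ
  have := hF.continuousAt_comp hev.continuousAt
  have hFx : F φ = φ x := by
    have : (WeakDual.toStrongDual F) φ = φ x := by rw [← hx]; rfl
    simpa using this
  rw [hFx] at this
  exact this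

/-- Uniqueness of coefficients for a series in the dual. -/
lemma dual_coeff_unique {v : ℕ → X} {vs : ℕ → (X →L[ℝ] ℝ)}
    (hbi : ∀ i j, vs i (v j) = if i = j then 1 else 0)
    {b : ℕ → ℝ} {ψ : X →L[ℝ] ℝ}
    (h : Tendsto (fun N => ∑ n ∈ Finset.range N, b n • vs n) atTop (𝓝 ψ)) (j : ℕ) :
    b j = ψ (v j) := by
  have hcont : Continuous fun χ : X →L[ℝ] ℝ => χ (v j) :=
    (NormedSpace.inclusionInDoubleDual ℝ X (v j)).continuous
  have h1 : Tendsto (fun N => (∑ n ∈ Finset.range N, b n • vs n) (v j)) atTop (𝓝 (ψ (v j))) :=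
    (hcont.tendsto ψ).comp h
  have h2 : Tendsto (fun N => (∑ n ∈ Finset.range N, b n • vs n) (v j)) atTop (𝓝 (b j)) := by
    apply tendsto_const_nhds.congr'
    filter_upwards [eventually_ge_atTop (j + 1)] with N hN
    rw [coeff_extract' hbi, if_pos (by omega)]
  exact tendsto_nhds_unique h2 h1

/-- The dual partial sum equals composition with the basis projection. -/
lemma dual_sum_eq_comp (v : ℕ → X) (vs : ℕ → (X →L[ℝ] ℝ)) (φ : X →L[ℝ] ℝ) (N : ℕ) :
    (∑ n ∈ Finset.range N, φ (v n) • vs n) = φ.comp (basisProj v vs N) := by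
  ext x
  rw [ContinuousLinearMap.sum_apply, ContinuousLinearMap.comp_apply, basisProj_apply, map_sum]
  simp [mul_comm]

end AuxJames

theorem stmt10 {X : Type*} [NormedAddCommGroup X] [NormedSpace ℝ X] [CompleteSpace X]
    (v : ℕ → X) (hv : IsSchauderBasis v)
    (vs : ℕ → (X →L[ℝ] ℝ))
    (hbi : ∀ i j, vs i (v j) = if i = j then 1 else 0)
    (hexp : ∀ x : X, Tendsto (fun N => ∑ n ∈ Finset.range N, vs n x • v n) atTop (𝓝 x)) :
    Function.Surjective ⇑(NormedSpace.inclusionInDoubleDual ℝ X) ↔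
      (BoundedlyCompleteOn Set.univ v ∧ IsSchauderBasis vs) := by
  classical
  -- uniform bound on basis projections
  obtain ⟨K, hK⟩ : ∃ K, ∀ N, ‖basisProj v vs N‖ ≤ K := by
    apply banach_steinhaus
    intro x
    obtain ⟨C, hC⟩ := ((hexp x).norm).bddAbove_range
    exact ⟨C, fun N => by
      simpa [basisProj_apply] using hC (Set.mem_range_self N)⟩
  set K0 : ℝ := max K 0 with hK0def
  have hK0 : ∀ N, ‖basisProj v vs N‖ ≤ K0 := fun N => (hK N).trans (le_max_left _ _)
  have hK0nn : (0:ℝ) ≤ K0 := le_max_right _ _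
  constructor
  · -- reflexive ⇒ boundedly complete ∧ shrinking
    intro hsurj
    constructor
    · -- boundedly complete
      intro a ⟨C, hC⟩
      set u : ℕ → X := fun N => ∑ n ∈ Finset.range N, a n • v n with hu
      have hps : ∀ N, partialSumOn Set.univ a v N = u N := by
        intro N; simp [partialSumOn, Set.indicator_univ, hu]
      have hCu : ∀ N, ‖u N‖ ≤ C := fun N => by rw [← hps]; exact hC N
      obtain ⟨x, hx⟩ := exists_weak_cluster hsurj u C hCu
      have hcoef : ∀ j, vs j x = a j := by
        intro j
        refine mapClusterPt_eq_of_tendsto (hx (vs j)) ?_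
        apply tendsto_const_nhds.congr'
        filter_upwards [eventually_ge_atTop (j + 1)] with N hN
        rw [hu]
        rw [coeff_extract hbi, if_pos (by omega)]
      refine ⟨x, (hexp x).congr fun N => ?_⟩
      rw [hps N]
      exact Finset.sum_congr rfl fun n _ => by rw [hcoef n]
    · -- vs is a Schauder basis of the dual
      intro φ
      refine ⟨fun n => φ (v n), ?_, ?_⟩
      · -- convergence : φ ∘ P_N → φ in norm
        have key : Tendsto (fun N => ‖φ.comp (basisProj v vs N) - φ‖) atTop (𝓝 0) := by
          by_contra hcon
          rw [Metric.tendsto_atTop] at hcon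
          push_neg at hcon
          obtain ⟨ε, hε, hfreq⟩ := hcon
          obtain ⟨σ, hσmono, hσ⟩ := Filter.extraction_of_frequently_atTop
            (frequently_atTop.2 fun N₀ => by
              obtain ⟨N, hN1, hN2⟩ := hfreq N₀; exact ⟨N, hN1, hN2⟩)
          -- for each k pick a unit-norm vector nearly attaining the norm
          have pick : ∀ k : ℕ, ∃ z : X, ‖z‖ ≤ 1 ∧
              ε / 2 ≤ (φ.comp (basisProj v vs (σ k)) - φ) z := by
            intro k
            have hnorm : ε ≤ ‖φ.comp (basisProj v vs (σ k)) - φ‖ := by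
              have := hσ k
              rwa [Real.dist_eq, sub_zero, abs_of_nonneg (norm_nonneg _)] at this
            set ψ := φ.comp (basisProj v vs (σ k)) - φ with hψ
            have hψn : ε / 2 < ‖ψ‖ := lt_of_lt_of_le (by linarith) hnorm
            have : ¬ ∀ x : X, ‖ψ x‖ ≤ (ε / 2) * ‖x‖ := by
              intro hall
              exact absurd (ContinuousLinearMap.opNorm_le_bound ψ (by linarith) hall)
                (not_le.2 hψn)
            push_neg at this
            obtain ⟨x, hxgt⟩ := this
            have hx0 : x ≠ 0 := by
              rintro rfl
              simp only [norm_zero, mul_zero, map_zero] at hxgt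
              linarith
            set z := ‖x‖⁻¹ • x with hz
            have hxn : (0:ℝ) < ‖x‖ := norm_pos_iff.2 hx0
            have hzn : ‖z‖ = 1 := by
              rw [hz, norm_smul, norm_inv, norm_norm, inv_mul_cancel₀ (ne_of_gt hxn)]
            have hψz : ε / 2 < ‖ψ z‖ := by
              rw [hz, map_smul]
              rw [norm_smul, norm_inv, norm_norm]
              calc ε / 2 = (ε / 2 * ‖x‖) * ‖x‖⁻¹ := by
                    field_simp
                _ < ‖ψ x‖ * ‖x‖⁻¹ := by
                    apply mul_lt_mul_of_pos_right hxgt (inv_pos.2 hxn)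
                _ = ‖x‖⁻¹ * ‖ψ x‖ := mul_comm _ _
            by_cases hsign : 0 ≤ ψ z
            · exact ⟨z, le_of_eq hzn, by
                rw [Real.norm_eq_abs, abs_of_nonneg hsign] at hψz; linarith⟩
            · refine ⟨-z, by rw [norm_neg]; exact le_of_eq hzn, ?_⟩
              rw [map_neg]
              rw [Real.norm_eq_abs, abs_of_neg (not_le.1 hsign)] at hψz
              linarith
          choose z hz1 hz2 using pick
          set y : ℕ → X := fun k => basisProj v vs (σ k) (z k) - z k with hy
          have hyb : ∀ k, ‖y k‖ ≤ K0 + 1 := by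
            intro k
            calc ‖y k‖ ≤ ‖basisProj v vs (σ k) (z k)‖ + ‖z k‖ := norm_sub_le _ _
              _ ≤ K0 * ‖z k‖ + ‖z k‖ := by
                  gcongr; exact (basisProj v vs (σ k)).le_of_opNorm_le (hK0 _) _
              _ ≤ K0 * 1 + 1 := by nlinarith [hz1 k, hK0nn]
              _ = K0 + 1 := by ring
          obtain ⟨w, hw⟩ := exists_weak_cluster hsurj y (K0 + 1) hyb
          have hwc : ∀ j, vs j w = 0 := by
            intro j
            refine mapClusterPt_eq_of_tendsto (hw (vs j)) ?_
            apply tendsto_const_nhds.congr'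
            filter_upwards [eventually_ge_atTop (j + 1)] with k hk
            have hσk : j < σ k := lt_of_lt_of_le (by omega) (hσmono.le_apply.trans le_rfl)
            rw [hy]
            simp only [map_sub, basisProj_apply]
            rw [coeff_extract hbi, if_pos hσk, sub_self]
          have hw0 : w = 0 := by
            have h1 := hexp w
            have h2 : Tendsto (fun N => ∑ n ∈ Finset.range N, vs n w • v n) atTop (𝓝 0) := by
              apply tendsto_const_nhds.congr
              intro N
              simp [hwc]
            exact (tendsto_nhds_unique h1 h2)
          have hφy : ∀ k, ε / 2 ≤ φ (y k) := by
            intro k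
            have := hz2 k
            simpa [hy, map_sub] using this
          have hcl : ε / 2 ≤ φ w := mapClusterPt_le_of_forall (hw φ) hφy
          rw [hw0, map_zero] at hcl
          linarith
        have : Tendsto (fun N => φ.comp (basisProj v vs N)) atTop (𝓝 φ) := by
          rw [tendsto_iff_norm_sub_tendsto_zero]
          exact key
        refine this.congr fun N => (dual_sum_eq_comp v vs φ N).symm
      · -- uniqueness
        intro b hb
        funext j
        exact dual_coeff_unique hbi hb j
  · -- boundedly complete ∧ shrinking ⇒ reflexive
    rintro ⟨hbc, hsh⟩ F
    -- shrinking: for every φ, φ ∘ P_N → φ in norm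
    have shrink : ∀ φ : X →L[ℝ] ℝ,
        Tendsto (fun N => φ.comp (basisProj v vs N)) atTop (𝓝 φ) := by
      intro φ
      obtain ⟨b, hbT, -⟩ := hsh φ
      have hb : ∀ j, b j = φ (v j) := fun j => dual_coeff_unique hbi hbT j
      refine hbT.congr fun N => ?_
      rw [← dual_sum_eq_comp]
      exact Finset.sum_congr rfl fun n _ => by rw [hb n]
    set a : ℕ → ℝ := fun n => F (vs n) with ha
    set u : ℕ → X := fun N => ∑ n ∈ Finset.range N, a n • v n with hu
    have hps : ∀ N, partialSumOn Set.univ a v N = u N := by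
      intro N; simp [partialSumOn, Set.indicator_univ, hu]
    have hFval : ∀ (ψ : X →L[ℝ] ℝ) N, ψ (u N) = F (ψ.comp (basisProj v vs N)) := by
      intro ψ N
      simp only [hu, ← dual_sum_eq_comp, map_sum]
      refine Finset.sum_congr rfl fun n _ => ?_
      simp [ha, mul_comm]
    have hbound : ∀ N, ‖u N‖ ≤ K0 * ‖F‖ := by
      intro N
      apply NormedSpace.norm_le_dual_bound ℝ (u N) (by positivity)
      intro ψ
      rw [hFval ψ N]
      calc ‖F (ψ.comp (basisProj v vs N))‖ ≤ ‖F‖ * ‖ψ.comp (basisProj v vs N)‖ :=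
            F.le_opNorm _
        _ ≤ ‖F‖ * (‖ψ‖ * ‖basisProj v vs N‖) := by
            gcongr; exact ContinuousLinearMap.opNorm_comp_le _ _
        _ ≤ ‖F‖ * (‖ψ‖ * K0) := by gcongr; exact hK0 N
        _ = K0 * ‖F‖ * ‖ψ‖ := by ring
    obtain ⟨x, hx⟩ := hbc a ⟨K0 * ‖F‖, fun N => by rw [hps]; exact hbound N⟩
    have hxu : Tendsto u atTop (𝓝 x) := by
      have := hx
      unfold ConvergesOn at this
      exact this.congr fun N => hps N
    refine ⟨x, ?_⟩
    ext ψ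
    have h1 : Tendsto (fun N => ψ (u N)) atTop (𝓝 (ψ x)) := (ψ.continuous.tendsto x).comp hxu
    have h2 : Tendsto (fun N => ψ (u N)) atTop (𝓝 (F ψ)) := by
      have := (F.continuous.tendsto ψ).comp (shrink ψ)
      exact this.congr fun N => (hFval ψ N).symm
    have := tendsto_nhds_unique h1 h2
    simpa [NormedSpace.inclusionInDoubleDual] using this
end

section
/- Let F be a Banach space with Schauder basis (b_i), biorthogonal functionals (b_i*), and K = { y ∈ F : b_i*(y) = 0 for i ∈ I₀, b_i*(y) ≤ 0 for i ∈ I₁ } with I₀, I₁ disjoint, I₀ ∪ I₁ = ℕ. Assume F is a Hilbert space and identify F* with F. For ȳ ∈ K of the form ȳ = G(x₀), the normal cone to K at ȳ equals { y : b_i**(y) = 0 for i ∈ I₁ with b_i*(ȳ) < 0, b_i**(y) ≥ 0 for i ∈ I₁ with b_i*(ȳ) = 0, b_i**(y) ∈ ℝ for i ∈ I₀ }, where y = Σ_i b_i**(y) b_i* is the expansion in the dual basic sequence. -/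
open Filter Topology Set

open scoped RealInnerProductSpace


section Aux15

variable {H : Type*} [NormedAddCommGroup H] [InnerProductSpace ℝ H]

/-- Auxiliary finite-rank operator `y ↦ ∑_{n<N} ⟪u n, y⟫ • v n`. -/
noncomputable def sumOp15 (u v : ℕ → H) (N : ℕ) : H →L[ℝ] H :=
  ∑ n ∈ Finset.range N, (innerSL ℝ (u n)).smulRight (v n)

lemma sumOp15_apply (u v : ℕ → H) (N : ℕ) (y : H) :
    sumOp15 u v N y = ∑ n ∈ Finset.range N, ⟪u n, y⟫ • v n := by
  simp [sumOp15]

end Aux15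

theorem stmt15 {H : Type*} [NormedAddCommGroup H] [InnerProductSpace ℝ H] [CompleteSpace H]
    (b : ℕ → H) (hb : IsSchauderBasis b)
    -- `bs i ∈ H` is the Riesz representer of the `i`-th biorthogonal functional `b_i*`
    (bs : ℕ → H)
    (hbi : ∀ i j, ⟪bs i, b j⟫ = if i = j then (1:ℝ) else 0)
    (hexp : ∀ y : H, Tendsto (fun N => ∑ n ∈ Finset.range N, ⟪bs n, y⟫ • b n) atTop (𝓝 y))
    (I₀ I₁ : Set ℕ) (hdisj : Disjoint I₀ I₁) (hunion : I₀ ∪ I₁ = Set.univ)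
    (ybar : H)
    (hybar : ybar ∈ {y : H | (∀ i ∈ I₀, ⟪bs i, y⟫ = 0) ∧ ∀ i ∈ I₁, ⟪bs i, y⟫ ≤ 0}) :
    -- the normal cone to `K` at `ybar` ...
    {y : H | ∀ k ∈ {y : H | (∀ i ∈ I₀, ⟪bs i, y⟫ = 0) ∧ ∀ i ∈ I₁, ⟪bs i, y⟫ ≤ 0},
        ⟪y, k - ybar⟫ ≤ 0} =
    -- ... equals the set of `y = ∑ b_i**(y) • bs i` with the sign conditions on coefficients
    {y : H |
      Tendsto (fun N => ∑ n ∈ Finset.range N, ⟪y, b n⟫ • bs n) atTop (𝓝 y) ∧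
      (∀ i ∈ I₁, ⟪bs i, ybar⟫ < 0 → ⟪y, b i⟫ = 0) ∧
      (∀ i ∈ I₁, ⟪bs i, ybar⟫ = 0 → 0 ≤ ⟪y, b i⟫)} := by
  
  obtain ⟨hy0, hy1⟩ := hybar
  set P : ℕ → H →L[ℝ] H := sumOp15 bs b with hPdef
  set Q : ℕ → H →L[ℝ] H := sumOp15 b bs with hQdef
  obtain ⟨C, hC⟩ : ∃ C, ∀ N, ‖P N‖ ≤ C := by
    apply banach_steinhaus
    intro x
    obtain ⟨M, hM⟩ := (hexp x).norm.bddAbove_range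
    refine ⟨M, fun N => ?_⟩
    have h : ‖P N x‖ = ‖∑ n ∈ Finset.range N, ⟪bs n, x⟫ • b n‖ := by
      rw [hPdef, sumOp15_apply]
    rw [h]
    exact hM ⟨N, rfl⟩
  have hC0 : 0 ≤ C := le_trans (norm_nonneg _) (hC 0)
  have hQP : ∀ N (x z : H), ⟪Q N x, z⟫ = ⟪x, P N z⟫ := by
    intro N x z
    rw [hPdef, hQdef, sumOp15_apply, sumOp15_apply, sum_inner, inner_sum]
    refine Finset.sum_congr rfl fun n _ => ?_
    rw [real_inner_smul_left, real_inner_smul_right, real_inner_comm x (b n)]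
    ring
  have hQbound : ∀ N x, ‖Q N x‖ ≤ C * ‖x‖ := by
    intro N x
    have h1 : ‖Q N x‖ ^ 2 ≤ ‖x‖ * (C * ‖Q N x‖) := by
      calc ‖Q N x‖ ^ 2 = ⟪Q N x, Q N x⟫ := (real_inner_self_eq_norm_sq _).symm
        _ = ⟪x, P N (Q N x)⟫ := hQP N x (Q N x)
        _ ≤ ‖x‖ * ‖P N (Q N x)‖ := real_inner_le_norm _ _
        _ ≤ ‖x‖ * (C * ‖Q N x‖) := by
            have h2 : ‖P N (Q N x)‖ ≤ C * ‖Q N x‖ :=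
              le_trans ((P N).le_opNorm _)
                (mul_le_mul_of_nonneg_right (hC N) (norm_nonneg _))
            exact mul_le_mul_of_nonneg_left h2 (norm_nonneg _)
    rcases eq_or_lt_of_le (norm_nonneg (Q N x)) with hq | hq
    · rw [← hq]; positivity
    · have h2 : ‖Q N x‖ * ‖Q N x‖ ≤ C * ‖x‖ * ‖Q N x‖ := by nlinarith [h1]
      exact le_of_mul_le_mul_right h2 hq
  have hQspan : ∀ w ∈ Submodule.span ℝ (Set.range bs),
      Tendsto (fun N => Q N w) atTop (𝓝 w) := by
    intro w hw
    induction hw using Submodule.span_induction with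
    | mem x hx =>
        obtain ⟨m, rfl⟩ := hx
        refine Tendsto.congr' ?_ tendsto_const_nhds
        filter_upwards [eventually_ge_atTop (m + 1)] with N hN
        rw [hQdef, sumOp15_apply]
        have : ∀ n, ⟪b n, bs m⟫ = if m = n then (1 : ℝ) else 0 := by
          intro n; rw [real_inner_comm]; exact hbi m n
        simp only [this, ite_smul, one_smul, zero_smul]
        rw [Finset.sum_ite_eq]
        rw [if_pos (Finset.mem_range.mpr (by omega))]
    | zero => simp only [map_zero]; exact (tendsto_const_nhds : Tendsto (fun _ : ℕ => (0 : H)) atTop _)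
    | add x y hx hy ihx ihy => simpa using ihx.add ihy
    | smul c x hx ih => simpa using ih.const_smul c
  have hQclos : ∀ z ∈ (Submodule.span ℝ (Set.range bs)).topologicalClosure,
      Tendsto (fun N => Q N z) atTop (𝓝 z) := by
    intro z hz
    rw [Metric.tendsto_atTop]
    intro ε hε
    have hz' : z ∈ closure (Submodule.span ℝ (Set.range bs) : Set H) := hz
    rw [Metric.mem_closure_iff] at hz'
    obtain ⟨w, hw, hwz⟩ := hz' (ε / (2 * (C + 1))) (by positivity)
    obtain ⟨N₀, hN₀⟩ := (Metric.tendsto_atTop.mp (hQspan w hw)) (ε / 4) (by positivity)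
    refine ⟨N₀, fun N hN => ?_⟩
    have hd : ‖z - w‖ < ε / (2 * (C + 1)) := by
      rw [← dist_eq_norm]; exact hwz
    have h1 : Q N z - z = Q N (z - w) + (Q N w - w) + (w - z) := by
      rw [map_sub]; abel
    have h2 : ‖Q N z - z‖ ≤ ‖Q N (z - w)‖ + ‖Q N w - w‖ + ‖w - z‖ := by
      rw [h1]; exact norm_add₃_le
    have h3 : ‖Q N (z - w)‖ ≤ C * ‖z - w‖ := hQbound N _
    have h4 : ‖Q N w - w‖ < ε / 4 := by
      rw [← dist_eq_norm]; exact hN₀ N hN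
    have h5 : ‖w - z‖ = ‖z - w‖ := norm_sub_rev _ _
    have h6 : (C + 1) * ‖z - w‖ < ε / 2 := by
      have : (C + 1) * ‖z - w‖ < (C + 1) * (ε / (2 * (C + 1))) := by
        apply mul_lt_mul_of_pos_left hd; linarith
      calc (C + 1) * ‖z - w‖ < (C + 1) * (ε / (2 * (C + 1))) := this
        _ = ε / 2 := by field_simp
    rw [dist_eq_norm]
    calc ‖Q N z - z‖ ≤ ‖Q N (z - w)‖ + ‖Q N w - w‖ + ‖w - z‖ := h2
      _ ≤ C * ‖z - w‖ + ε / 4 + ‖z - w‖ := by rw [h5]; linarith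
      _ = (C + 1) * ‖z - w‖ + ε / 4 := by ring
      _ < ε / 2 + ε / 4 := by linarith
      _ < ε := by linarith
  ext y
  simp only [Set.mem_setOf_eq]
  constructor
  · intro hNcone
    have key : ∀ i ∈ I₁, ∀ c : ℝ, ⟪bs i, ybar⟫ + c ≤ 0 → c * ⟪y, b i⟫ ≤ 0 := by
      intro i hi c hc
      have hk := hNcone (ybar + c • b i) ?_
      · rwa [add_sub_cancel_left, real_inner_smul_right] at hk
      · constructor
        · intro j hj
          have hji : j ≠ i := fun h => (hdisj.ne_of_mem hj hi) h
          rw [inner_add_right, real_inner_smul_right, hbi j i, if_neg hji, hy0 j hj]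
          ring
        · intro j hj
          rw [inner_add_right, real_inner_smul_right, hbi j i]
          by_cases h : j = i
          · subst h; simpa using hc
          · rw [if_neg h]; simpa using hy1 j hj
    have sign1 : ∀ i ∈ I₁, ⟪bs i, ybar⟫ < 0 → ⟪y, b i⟫ = 0 := by
      intro i hi hlt
      have h1 := key i hi (-⟪bs i, ybar⟫) (by linarith)
      have h2 := key i hi ⟪bs i, ybar⟫ (by linarith)
      have ha : ⟪y, b i⟫ ≤ 0 := by nlinarith
      have hb' : 0 ≤ ⟪y, b i⟫ := by nlinarith
      linarith
    have sign2 : ∀ i ∈ I₁, ⟪bs i, ybar⟫ = 0 → 0 ≤ ⟪y, b i⟫ := by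
      intro i hi heq
      have h1 := key i hi (-1) (by rw [heq]; norm_num)
      linarith
    refine ⟨?_, sign1, sign2⟩
    have hyc : y ∈ (Submodule.span ℝ (Set.range bs)).topologicalClosure := by
      rw [← Submodule.orthogonal_orthogonal_eq_closure, Submodule.mem_orthogonal]
      intro z hz
      have hz' : ∀ i, ⟪bs i, z⟫ = 0 := fun i =>
        hz (bs i) (Submodule.subset_span ⟨i, rfl⟩)
      have hmem : ∀ s : H, (∀ i, ⟪bs i, s⟫ = 0) →
          ((∀ i ∈ I₀, ⟪bs i, ybar + s⟫ = 0) ∧ ∀ i ∈ I₁, ⟪bs i, ybar + s⟫ ≤ 0) := by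
        intro s hs
        constructor
        · intro i hi; rw [inner_add_right, hs i, hy0 i hi]; ring
        · intro i hi; rw [inner_add_right, hs i]; simpa using hy1 i hi
      have h₁ := hNcone (ybar + z) (hmem z hz')
      have h₂ := hNcone (ybar + (-z)) (hmem (-z) (by intro i; rw [inner_neg_right, hz' i]; ring))
      rw [add_sub_cancel_left] at h₁ h₂
      rw [inner_neg_right] at h₂
      rw [real_inner_comm]
      linarith
    have hlim := hQclos y hyc
    refine hlim.congr fun N => ?_
    rw [hQdef, sumOp15_apply]
    exact Finset.sum_congr rfl fun n _ => by rw [real_inner_comm]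
  · rintro ⟨hconv, hs1, hs2⟩ k ⟨hk0, hk1⟩
    refine le_of_tendsto (hconv.inner (tendsto_const_nhds (x := k - ybar)))
      (Filter.Eventually.of_forall fun N => ?_)
    rw [sum_inner]
    apply Finset.sum_nonpos
    intro n _
    rw [real_inner_smul_left]
    have hn : n ∈ I₀ ∪ I₁ := by rw [hunion]; trivial
    rcases hn with hn | hn
    · have h0 : ⟪bs n, k - ybar⟫ = 0 := by
        rw [inner_sub_right, hk0 n hn, hy0 n hn]; ring
      rw [h0, mul_zero]
    · rcases lt_or_eq_of_le (hy1 n hn) with h | h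
      · rw [hs1 n hn h, zero_mul]
      · have h1 : ⟪bs n, k - ybar⟫ ≤ 0 := by
          rw [inner_sub_right, h, sub_zero]
          exact hk1 n hn
        have h2 := hs2 n hn h
        nlinarith [h1, h2]
end

section
/- Let E, Y be Banach spaces, U ⊂ E open, x₀ ∈ U, and f : U → Y a C¹ mapping such that Df(x₀) : E → Y is surjective (Im Df(x₀) = Y) and Df is continuous at x₀. Then the Bouligand tangent cone to M = { x ∈ U : f(x) = f(x₀) } at x₀ equals ker Df(x₀). -/
open Filter Topology Set

set_option maxHeartbeats 1000000 in
theorem stmt16 {E Y : Type*} [NormedAddCommGroup E] [NormedSpace ℝ E] [CompleteSpace E]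
    [NormedAddCommGroup Y] [NormedSpace ℝ Y] [CompleteSpace Y]
    (U : Set E) (hU : IsOpen U) (x₀ : E) (hx₀ : x₀ ∈ U)
    (f : E → Y) (f' : E → (E →L[ℝ] Y))
    (hdf : ∀ x ∈ U, HasFDerivAt f (f' x) x)
    (hcont : ContinuousAt f' x₀)
    (hsurj : Function.Surjective ⇑(f' x₀)) :
    bouligandTangentCone {x ∈ U | f x = f x₀} x₀ = {d : E | f' x₀ d = 0} := by
  classical
  have hd0 : HasFDerivAt f (f' x₀) x₀ := hdf x₀ hx₀
  have hstrict : HasStrictFDerivAt f (f' x₀) x₀ :=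
    hasStrictFDerivAt_of_hasFDerivAt_of_continuousAt
      ((hU.eventually_mem hx₀).mono fun y hy => hdf y hy) hcont
  have hrange : LinearMap.range (f' x₀ : E →ₗ[ℝ] Y) = ⊤ := by
    rw [LinearMap.range_eq_top]; exact hsurj
  set fs := (f' x₀).nonlinearRightInverseOfSurjective hrange with hfs
  have Npos : (0:NNReal) < fs.nnnorm :=
    (f' x₀).nonlinearRightInverseOfSurjective_nnnorm_pos hrange
  set c : NNReal := fs.nnnorm⁻¹ / 2 with hc
  have cpos : (0:NNReal) < c := by
    rw [hc]; positivity
  have cposR : (0:ℝ) < (c:ℝ) := cpos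
  obtain ⟨s, s_nhds, hs⟩ := hstrict.approximates_deriv_on_nhds (Or.inr cpos)
  obtain ⟨ε, εpos, hε⟩ : ∃ ε > 0, Metric.ball x₀ ε ⊆ s ∩ U :=
    Metric.mem_nhds_iff.1 (Filter.inter_mem s_nhds (hU.mem_nhds hx₀))
  have key : ∀ x r, 0 ≤ r → dist x x₀ + r < ε → dist (f x₀) (f x) ≤ (c:ℝ) * r →
      ∃ z, dist z x ≤ r ∧ f z = f x₀ ∧ z ∈ U := by
    intro x r hr hlt hfx
    have hsub : Metric.closedBall x r ⊆ Metric.ball x₀ ε := by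
      intro z hz
      have hz' : dist z x ≤ r := Metric.mem_closedBall.1 hz
      have : dist z x₀ ≤ dist z x + dist x x₀ := dist_triangle _ _ _
      have : dist z x₀ < ε := by linarith
      exact Metric.mem_ball.2 this
    have hsub' : Metric.closedBall x r ⊆ s := hsub.trans (hε.trans Set.inter_subset_left)
    have hsurjOn := (hs.mono_set hsub').surjOn_closedBall_of_nonlinearRightInverse
      fs hr (subset_refl _)
    have hN : ((fs.nnnorm : ℝ)⁻¹ - (c:ℝ)) = (c:ℝ) := by
      have : (c:ℝ) = (fs.nnnorm : ℝ)⁻¹ / 2 := by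
        rw [hc]; push_cast; rfl
      rw [this]; ring
    have hmem : f x₀ ∈ Metric.closedBall (f x) (((fs.nnnorm : ℝ)⁻¹ - (c:ℝ)) * r) := by
      rw [Metric.mem_closedBall, hN]; exact hfx
    obtain ⟨z, hz, hfz⟩ := hsurjOn hmem
    exact ⟨z, Metric.mem_closedBall.1 hz, hfz, (hε (hsub hz)).2⟩
  ext d
  simp only [Set.mem_setOf_eq]
  constructor
  · rintro ⟨yk, tk, hmem, htpos, ht0, hyk, hdiv⟩
    -- easy direction: tangent cone ⊆ kernel
    have hbound : ∀ᶠ k in atTop, ‖yk k - x₀‖ ≤ (‖d‖ + 1) * tk k := by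
      have hn : Tendsto (fun k => ‖(tk k)⁻¹ • (yk k - x₀)‖) atTop (𝓝 ‖d‖) := hdiv.norm
      filter_upwards [hn.eventually_lt_const (lt_add_one ‖d‖)] with k hk
      have h1 : ‖(tk k)⁻¹ • (yk k - x₀)‖ = (tk k)⁻¹ * ‖yk k - x₀‖ := by
        rw [norm_smul, Real.norm_eq_abs, abs_of_nonneg (inv_nonneg.2 (htpos k).le)]
      rw [h1] at hk
      have := (htpos k)
      calc ‖yk k - x₀‖ = tk k * ((tk k)⁻¹ * ‖yk k - x₀‖) := by
            field_simp
        _ ≤ tk k * (‖d‖ + 1) := by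
            exact mul_le_mul_of_nonneg_left hk.le (htpos k).le
        _ = (‖d‖ + 1) * tk k := by ring
    have hkey : Tendsto (fun k => (tk k)⁻¹ • (f (yk k) - f x₀ - f' x₀ (yk k - x₀)))
        atTop (𝓝 0) := by
      rw [NormedAddCommGroup.tendsto_nhds_zero]
      intro δ hδ
      have hB : (0:ℝ) < ‖d‖ + 1 := by positivity
      have hδ' : 0 < δ / (2 * (‖d‖ + 1)) := by positivity
      have hlo := hd0.isLittleO.def hδ'
      filter_upwards [hyk.eventually hlo, hbound] with k h1 h2
      have htk := htpos k
      have hns : ‖(tk k)⁻¹ • (f (yk k) - f x₀ - f' x₀ (yk k - x₀))‖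
          = (tk k)⁻¹ * ‖f (yk k) - f x₀ - f' x₀ (yk k - x₀)‖ := by
        rw [norm_smul, Real.norm_eq_abs, abs_of_nonneg (inv_nonneg.2 htk.le)]
      rw [hns]
      have h1' : ‖f (yk k) - f x₀ - f' x₀ (yk k - x₀)‖
          ≤ δ / (2 * (‖d‖ + 1)) * ‖yk k - x₀‖ := h1
      have step : (tk k)⁻¹ * ‖f (yk k) - f x₀ - f' x₀ (yk k - x₀)‖
          ≤ (tk k)⁻¹ * (δ / (2 * (‖d‖ + 1)) * ((‖d‖ + 1) * tk k)) := by
        apply mul_le_mul_of_nonneg_left _ (inv_nonneg.2 htk.le)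
        exact h1'.trans (mul_le_mul_of_nonneg_left h2 hδ'.le)
      have heq : (tk k)⁻¹ * (δ / (2 * (‖d‖ + 1)) * ((‖d‖ + 1) * tk k)) = δ / 2 := by
        field_simp
      rw [heq] at step
      exact lt_of_le_of_lt step (by linarith)
    have hlim2 : Tendsto (fun k => (tk k)⁻¹ • (f (yk k) - f x₀ - f' x₀ (yk k - x₀)))
        atTop (𝓝 (-(f' x₀ d))) := by
      have hcomp : Tendsto (fun k => f' x₀ ((tk k)⁻¹ • (yk k - x₀))) atTop
          (𝓝 (f' x₀ d)) := ((f' x₀).continuous.tendsto d).comp hdiv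
      have heq : (fun k => (tk k)⁻¹ • (f (yk k) - f x₀ - f' x₀ (yk k - x₀)))
          = fun k => -(f' x₀ ((tk k)⁻¹ • (yk k - x₀))) := by
        funext k
        have hf0 : f (yk k) = f x₀ := (hmem k).2
        rw [hf0, (f' x₀).map_smul]
        simp only [map_sub, sub_self, zero_sub]
        module
      rw [heq]
      exact hcomp.neg
    have := tendsto_nhds_unique hlim2 hkey
    simpa [neg_eq_zero] using this
  · -- hard direction: kernel ⊆ tangent cone
    intro hd
    set tk : ℕ → ℝ := fun k => ((k:ℝ) + 1)⁻¹ with htk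
    have htpos : ∀ k, 0 < tk k := fun k => by positivity
    have ht0 : Tendsto tk atTop (𝓝 0) := by
      apply tendsto_inv_atTop_zero.comp
      exact tendsto_atTop_add_const_right _ 1 tendsto_natCast_atTop_atTop
    set xx : ℕ → E := fun k => x₀ + tk k • d with hxx
    have hx_lim : Tendsto xx atTop (𝓝 x₀) := by
      have : Tendsto (fun k => x₀ + tk k • d) atTop (𝓝 (x₀ + (0:ℝ) • d)) :=
        tendsto_const_nhds.add (ht0.smul_const d)
      simpa using this
    have hdist0 : Tendsto (fun k => dist (xx k) x₀) atTop (𝓝 0) :=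
      tendsto_iff_dist_tendsto_zero.1 hx_lim
    -- the quotient (tk k)⁻¹ * ‖f (xx k) - f x₀‖ tends to 0
    have hsmall : Tendsto (fun k => (tk k)⁻¹ • (f (xx k) - f x₀)) atTop (𝓝 0) := by
      have hcnorm : Tendsto (fun k : ℕ => ‖((k:ℝ) + 1)‖) atTop atTop := by
        apply tendsto_atTop_mono (fun k : ℕ => ?_)
          (tendsto_atTop_add_const_right _ 1 tendsto_natCast_atTop_atTop)
        rw [Real.norm_eq_abs, abs_of_nonneg (by positivity)]
      have := hd0.lim d hcnorm
      rw [hd] at this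
      convert this using 2 with k
      simp [hxx, htk]
    have hnorm : Tendsto (fun k => (tk k)⁻¹ * ‖f (xx k) - f x₀‖) atTop (𝓝 0) := by
      have := hsmall.norm
      simp only [norm_smul, Real.norm_eq_abs, norm_zero] at this
      refine this.congr fun k => ?_
      rw [abs_of_nonneg (inv_nonneg.2 (htpos k).le)]
    set r : ℕ → ℝ := fun k => (c:ℝ)⁻¹ * ‖f (xx k) - f x₀‖ with hrdef
    have hr0 : ∀ k, 0 ≤ r k := fun k => by positivity
    have hrt : Tendsto (fun k => (tk k)⁻¹ * r k) atTop (𝓝 0) := by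
      have := hnorm.const_mul (c:ℝ)⁻¹
      rw [mul_zero] at this
      refine this.congr fun k => ?_
      rw [hrdef]; ring
    have hrlim : Tendsto r atTop (𝓝 0) := by
      have : Tendsto (fun k => tk k * ((tk k)⁻¹ * r k)) atTop (𝓝 (0 * 0)) :=
        ht0.mul hrt
      rw [mul_zero] at this
      refine this.congr fun k => ?_
      rw [← mul_assoc, mul_inv_cancel₀ (htpos k).ne', one_mul]
    have ev1 : ∀ᶠ k in atTop, dist (xx k) x₀ + r k < ε := by
      have : Tendsto (fun k => dist (xx k) x₀ + r k) atTop (𝓝 (0 + 0)) :=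
        hdist0.add hrlim
      rw [add_zero] at this
      exact this.eventually_lt_const εpos
    have ev2 : ∀ k, dist (f x₀) (f (xx k)) ≤ (c:ℝ) * r k := by
      intro k
      have : (c:ℝ) * r k = ‖f (xx k) - f x₀‖ := by
        rw [hrdef]; field_simp
      rw [this, dist_eq_norm, ← norm_neg]
      simp
    have evAll : ∀ᶠ k in atTop, ∃ z, dist z (xx k) ≤ r k ∧ f z = f x₀ ∧ z ∈ U :=
      ev1.mono fun k h1 => key (xx k) (r k) (hr0 k) h1 (ev2 k)
    obtain ⟨K, hK⟩ := eventually_atTop.1 evAll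
    have hall : ∀ k, ∃ z,
        (K ≤ k → dist z (xx k) ≤ r k ∧ f z = f x₀ ∧ z ∈ U) ∧ (¬K ≤ k → z = x₀) := by
      intro k
      by_cases h : K ≤ k
      · obtain ⟨z, hz⟩ := hK k h
        exact ⟨z, fun _ => hz, fun h' => absurd h h'⟩
      · exact ⟨x₀, fun h' => absurd h' h, fun _ => rfl⟩
    choose yk hy using hall
    have hspec : ∀ k, K ≤ k → dist (yk k) (xx k) ≤ r k ∧ f (yk k) = f x₀ ∧ yk k ∈ U :=
      fun k h => (hy k).1 h
    refine ⟨yk, tk, ?_, htpos, ht0, ?_, ?_⟩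
    · intro k
      by_cases h : K ≤ k
      · exact ⟨(hspec k h).2.2, (hspec k h).2.1⟩
      · rw [(hy k).2 h]
        exact ⟨hx₀, rfl⟩
    · rw [tendsto_iff_dist_tendsto_zero]
      apply squeeze_zero' (Filter.Eventually.of_forall fun k => dist_nonneg)
        (g := fun k => r k + dist (xx k) x₀) ?_ ?_
      · filter_upwards [eventually_ge_atTop K] with k hk
        calc dist (yk k) x₀ ≤ dist (yk k) (xx k) + dist (xx k) x₀ := dist_triangle _ _ _
          _ ≤ r k + dist (xx k) x₀ := add_le_add_left (hspec k hk).1 _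
      · have := hrlim.add hdist0
        rwa [add_zero] at this
    · have h1 : Tendsto (fun k => (tk k)⁻¹ • (yk k - xx k)) atTop (𝓝 0) := by
        apply squeeze_zero_norm' ?_ hrt
        filter_upwards [eventually_ge_atTop K] with k hk
        rw [norm_smul, Real.norm_eq_abs, abs_of_nonneg (inv_nonneg.2 (htpos k).le)]
        apply mul_le_mul_of_nonneg_left _ (inv_nonneg.2 (htpos k).le)
        rw [← dist_eq_norm]
        exact (hspec k hk).1
      have h2 : (fun k => (tk k)⁻¹ • (yk k - x₀))
          = fun k => (tk k)⁻¹ • (yk k - xx k) + d := by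
        funext k
        have hx : xx k - x₀ = tk k • d := by simp [hxx]
        rw [show yk k - x₀ = (yk k - xx k) + (xx k - x₀) by abel, smul_add, hx,
          smul_smul, inv_mul_cancel₀ (htpos k).ne', one_smul]
      rw [h2]
      have := h1.add_const d
      rwa [zero_add] at this
end
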